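/- arXiv:2008.01235 — 3 statements merged into one kernel-verified Lean document; each statement's English description precedes it below -/
import Mathlib

section
/- Let E be a balanced vector bundle on P^1 of rank r ≥ 2 and slope s, and let ℓ ≥ ⌊s⌋ be an integer. Then there exists a balanced vector bundle K on P^1 with rk(K) = r - 1 and deg(K) = deg(E) - ℓ, together with a locally split injection (subbundle inclusion) K → E. -/
/-!
Concrete model of bundles and bundle maps on ℙ¹ over a field `k`: a bundle is
`⊕_i O(a i)`; a bundle map `⊕_j O(b j) → ⊕_i O(a i)` is a matrix `M` whose `(i,j)` entry is a homogeneous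
polynomial of degree `a i - b j` in two variables (zero if that degree is
negative).  The map is a locally split injection (subbundle inclusion) iff the
evaluated matrix has full column rank at every point `p ≠ 0` of `𝔸² \ 0`
(equivalently at every point of ℙ¹).  Balanced = summand degrees differ by at
most 1; the floor of the slope of `E` is `Int.fdiv (∑ a i) r`.
-/

/-- `M` is a matrix of homogeneous forms representing a bundle map
`⊕_j O(b j) → ⊕_i O(a i)`. -/
def IsHomMat {k : Type} [CommRing k] {ι κ' : Type}
    (a : ι → ℤ) (b : κ' → ℤ) (M : ι → κ' → MvPolynomial (Fin 2) k) : Prop :=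
  ∀ i j, (M i j).IsHomogeneous (a i - b j).toNat ∧ (a i - b j < 0 → M i j = 0)

/-- The columns of `M` are linearly independent at every point of ℙ¹,
i.e. the corresponding bundle map is a locally split injection. -/
def IsLocSplitInj {k : Type} [CommRing k] {ι κ' : Type}
    (M : ι → κ' → MvPolynomial (Fin 2) k) : Prop :=
  ∀ p : Fin 2 → k, p ≠ 0 →
    LinearIndependent k fun j : κ' => fun i : ι => MvPolynomial.eval p (M i j)

/-!
Sort the degrees of `E` increasingly, `a₀ ≤ ⋯ ≤ a_{r-1}`. A sorted balanced sequence of integers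
is determined by its sum and grows pointwise with it, so the sorted balanced `b` of sum
`deg E - ℓ ≤ deg E - a₀` satisfies `bⱼ ≤ aⱼ₊₁`. The bidiagonal map sending `O(bⱼ)` to
`O(aⱼ) ⊕ O(aⱼ₊₁)` by `(x^(aⱼ - bⱼ), y^(aⱼ₊₁ - bⱼ))` then has full rank wherever `y ≠ 0`, and
also where `y = 0` as soon as every `bⱼ ≤ aⱼ`. That comparison fails only when
`deg E - ℓ > deg E - a_{r-1}`, which forces `b = (a₁, …, a_{r-1})`; then the `y`-entries are
`y⁰ = 1` and the map is split at `y = 0` as well.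
-/

open MvPolynomial Matrix

def IsBalanced {ι : Type*} (x : ι → ℤ) : Prop :=
  ∀ i j, x i ≤ x j + 1

namespace IsBalanced

variable {ι ι' : Type*} {x y : ι → ℤ}

theorem comp (hx : IsBalanced x) (f : ι' → ι) : IsBalanced (x ∘ f) :=
  fun i j => hx (f i) (f j)

theorem le_of_sum_le [Fintype ι] [LinearOrder ι] (hx : IsBalanced x) (hy : IsBalanced y)
    (hxm : Monotone x) (hym : Monotone y) (h : ∑ i, x i ≤ ∑ i, y i) : x ≤ y := by
  intro j
  refine le_of_not_gt fun hj : y j < x j => ?_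
  have hyx : ∀ i, y i ≤ x i := fun i => by
    rcases le_total j i with hji | hij
    · have := hxm hji; have := hy i j; omega
    · have := hym hij; have := hx j i; omega
  linarith [Finset.sum_lt_sum (fun i _ => hyx i) ⟨j, Finset.mem_univ _, hj⟩]

end IsBalanced

theorem exists_isBalanced_monotone_sum_eq (n : ℕ) (T : ℤ) :
    ∃ b : Fin (n + 1) → ℤ, IsBalanced b ∧ Monotone b ∧ ∑ j, b j = T := by
  obtain ⟨u, hu⟩ : ∃ u : ℕ, (u : ℤ) = T % (n + 1) :=
    ⟨_, Int.toNat_of_nonneg (Int.emod_nonneg _ (by positivity))⟩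
  have hun : u < n + 1 := by
    have := Int.emod_lt_of_pos T (show (0 : ℤ) < n + 1 by positivity)
    omega
  refine ⟨fun j => T / (n + 1) + if (j : ℕ) < n + 1 - u then 0 else 1, ?_, ?_, ?_⟩
  · intro i j
    dsimp only
    split_ifs <;> omega
  · intro i j hij
    have : (i : ℕ) ≤ j := hij
    dsimp only
    split_ifs <;> omega
  · have hcard : (Finset.univ.filter fun j : Fin (n + 1) => (j : ℕ) < n + 1 - u).card =
        n + 1 - u := by
      rw [Fin.card_filter_val_lt]; omega
    simp only [Finset.sum_add_distrib, Finset.sum_ite, Finset.sum_const_zero, Finset.sum_const,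
      Finset.card_univ, Fintype.card_fin]
    rw [Finset.filter_not, Finset.card_sdiff_of_subset (Finset.filter_subset _ _), hcard]
    have := Int.mul_ediv_add_emod T (n + 1)
    simp only [Int.nsmul_eq_mul, Finset.card_univ, Fintype.card_fin, Nat.cast_add, Nat.cast_one,
      Nat.cast_sub hun.le, Nat.cast_sub (Nat.sub_le _ _), mul_one, zero_add]
    omega

theorem le_fdiv_sum_of_forall_le {r : ℕ} (hr : 0 < r) {a : Fin r → ℤ} {m : ℤ}
    (h : ∀ i, m ≤ a i) : m ≤ Int.fdiv (∑ i, a i) r := by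
  rw [Int.fdiv_eq_ediv_of_nonneg _ (by positivity), Int.le_ediv_iff_mul_le (by positivity)]
  simpa [mul_comm] using Finset.card_nsmul_le_sum Finset.univ a m fun i _ => h i

theorem Matrix.linearIndependent_cols_of_det_submatrix_ne_zero {R m n : Type*} [CommRing R]
    [IsDomain R] [Fintype n] [DecidableEq n] {A : Matrix m n R} (f : n → m)
    (h : (A.submatrix f id).det ≠ 0) : LinearIndependent R A.col :=
  LinearIndependent.of_comp (LinearMap.funLeft R R f) (linearIndependent_cols_of_det_ne_zero h)

section Bidiagonal

variable {R S : Type*} {n : ℕ}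

def bidiagonal [Zero R] (d e : Fin (n + 1) → R) : Matrix (Fin (n + 2)) (Fin (n + 1)) R :=
  Matrix.of fun i j => if i = j.castSucc then d j else if i = j.succ then e j else 0

theorem bidiagonal_map [Zero R] [Zero S] (d e : Fin (n + 1) → R) (f : R → S) (hf : f 0 = 0) :
    (bidiagonal d e).map f = bidiagonal (f ∘ d) (f ∘ e) := by
  ext i j
  simp only [bidiagonal, map_apply, of_apply, Function.comp_apply]
  split_ifs <;> simp [hf]

theorem linearIndependent_cols_bidiagonal [CommRing R] [IsDomain R] {d e : Fin (n + 1) → R}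
    (h : (∀ j, d j ≠ 0) ∨ ∀ j, e j ≠ 0) : LinearIndependent R (bidiagonal d e).col := by
  rcases h with hd | he
  · refine linearIndependent_cols_of_det_submatrix_ne_zero Fin.castSucc ?_
    rw [det_of_isLowerTriangular]
    · simpa [bidiagonal] using Finset.prod_ne_zero_iff.mpr fun j _ => hd j
    · intro i j (hij : i < j)
      simp only [bidiagonal, submatrix_apply, of_apply, id, Fin.ext_iff, Fin.val_castSucc,
        Fin.val_succ]
      rw [if_neg (by omega), if_neg (by omega)]
  · refine linearIndependent_cols_of_det_submatrix_ne_zero Fin.succ ?_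
    rw [det_of_isUpperTriangular]
    · simpa [bidiagonal, Fin.castSucc_lt_succ.ne'] using
        Finset.prod_ne_zero_iff.mpr fun j _ => he j
    · intro i j (hij : j < i)
      simp only [bidiagonal, submatrix_apply, of_apply, id, Fin.ext_iff, Fin.val_castSucc,
        Fin.val_succ]
      rw [if_neg (by omega), if_neg (by omega)]

end Bidiagonal

section MonomialBidiagonal

variable (k : Type) {n : ℕ}

noncomputable def monomialBidiagonal [CommRing k] (a : Fin (n + 2) → ℤ) (b : Fin (n + 1) → ℤ) :
    Matrix (Fin (n + 2)) (Fin (n + 1)) (MvPolynomial (Fin 2) k) :=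
  bidiagonal (fun j => if b j ≤ a j.castSucc then X 0 ^ (a j.castSucc - b j).toNat else 0)
    fun j => X 1 ^ (a j.succ - b j).toNat

variable {k} {a : Fin (n + 2) → ℤ} {b : Fin (n + 1) → ℤ}

theorem isHomMat_monomialBidiagonal [CommRing k] (h : b ≤ a ∘ Fin.succ) :
    IsHomMat a b (monomialBidiagonal k a b) := by
  intro i j
  simp only [monomialBidiagonal, bidiagonal, of_apply]
  split_ifs with hcast hle hsucc
  · subst hcast; exact ⟨isHomogeneous_X_pow _ _, by omega⟩
  · exact ⟨isHomogeneous_zero _ _ _, fun _ => rfl⟩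
  · subst hsucc; exact ⟨isHomogeneous_X_pow _ _, by have : b j ≤ a j.succ := h j; omega⟩
  · exact ⟨isHomogeneous_zero _ _ _, fun _ => rfl⟩

theorem isLocSplitInj_monomialBidiagonal [Field k]
    (h : b ≤ a ∘ Fin.castSucc ∨ b = a ∘ Fin.succ) :
    IsLocSplitInj (monomialBidiagonal k a b) := by
  intro p hp
  change LinearIndependent k ((monomialBidiagonal k a b).map (eval p)).col
  rw [monomialBidiagonal, bidiagonal_map _ _ _ (map_zero _)]
  apply linearIndependent_cols_bidiagonal
  by_cases hp1 : p 1 = 0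
  · have hp0 : p 0 ≠ 0 := fun h0 => hp (funext fun i => by fin_cases i <;> assumption)
    rcases h with hcast | hsucc
    · exact .inl fun j => by simp [show b j ≤ a j.castSucc from hcast j, hp0]
    · exact .inr fun j => by simp [hsucc]
  · exact .inr fun j => by simp [hp1]

end MonomialBidiagonal

theorem IsHomMat.comp_equiv {k : Type} [CommRing k] {ι ι' κ : Type} {a : ι → ℤ} {b : κ → ℤ}
    {M : ι' → κ → MvPolynomial (Fin 2) k} (e : ι' ≃ ι) (h : IsHomMat (a ∘ e) b M) :
    IsHomMat a b (M ∘ e.symm) := by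
  intro i j
  simpa using h (e.symm i) j

theorem IsLocSplitInj.comp_equiv {k : Type} [Field k] {ι ι' κ : Type}
    {M : ι' → κ → MvPolynomial (Fin 2) k} (e : ι' ≃ ι) (h : IsLocSplitInj M) :
    IsLocSplitInj (M ∘ e.symm) :=
  fun p hp => (h p hp).map' (LinearEquiv.funCongrLeft k k e.symm).toLinearMap
    (LinearEquiv.ker _)

theorem exists_isBalanced_sum_eq_le_comp_succ {n : ℕ} {a : Fin (n + 2) → ℤ} (ha : IsBalanced a)
    (ham : Monotone a) (T : ℤ) (hT : T ≤ ∑ i, a i - a 0) :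
    ∃ b : Fin (n + 1) → ℤ, IsBalanced b ∧ ∑ j, b j = T ∧ b ≤ a ∘ Fin.succ ∧
      (b ≤ a ∘ Fin.castSucc ∨ b = a ∘ Fin.succ) := by
  obtain ⟨b, hb, hbm, rfl⟩ := exists_isBalanced_monotone_sum_eq n T
  have hsum_succ : ∑ j, (a ∘ Fin.succ) j = ∑ i, a i - a 0 := by simp [Fin.sum_univ_succ a]
  have hsum_cast : ∑ j, (a ∘ Fin.castSucc) j = ∑ i, a i - a (Fin.last _) := by
    simp [Fin.sum_univ_castSucc a]
  have hmsucc : Monotone (a ∘ Fin.succ) := ham.comp Fin.strictMono_succ.monotone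
  have hle_succ := hb.le_of_sum_le (ha.comp _) hbm hmsucc (hsum_succ ▸ hT)
  refine ⟨b, hb, rfl, hle_succ, ?_⟩
  by_cases hcast : ∑ j, b j ≤ ∑ j, (a ∘ Fin.castSucc) j
  · exact .inl (hb.le_of_sum_le (ha.comp _) hbm (ham.comp Fin.strictMono_castSucc.monotone) hcast)
  · have := ha (Fin.last _) 0
    exact .inr (le_antisymm hle_succ ((ha.comp _).le_of_sum_le hb hmsucc hbm (by omega)))

theorem exists_balanced_corank_one_subbundle_general
    {k : Type} [Field k]
    (r : ℕ) (hr : 2 ≤ r) (a : Fin r → ℤ)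
    (hbal : ∀ i j, a i ≤ a j + 1)
    (ℓ : ℤ) (hℓ : Int.fdiv (∑ i, a i) (r : ℤ) ≤ ℓ) :
    ∃ b : Fin (r - 1) → ℤ, (∀ i j, b i ≤ b j + 1) ∧
      (∑ j, b j) = (∑ i, a i) - ℓ ∧
      ∃ M : Fin r → Fin (r - 1) → MvPolynomial (Fin 2) k,
        IsHomMat a b M ∧ IsLocSplitInj M := by
  obtain ⟨n, rfl⟩ : ∃ n, r = n + 2 := ⟨r - 2, by omega⟩
  set σ := Tuple.sort a
  have hmono : Monotone (a ∘ σ) := Tuple.monotone_sort a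
  have hsum : ∑ i, (a ∘ σ) i = ∑ i, a i := Equiv.sum_comp σ a
  have hmin : (a ∘ σ) 0 ≤ ℓ :=
    (le_fdiv_sum_of_forall_le (by omega) fun i => hmono (Fin.zero_le i)).trans (hsum ▸ hℓ)
  obtain ⟨b, hb, hbsum, hsucc, hcast⟩ := exists_isBalanced_sum_eq_le_comp_succ
    (IsBalanced.comp hbal σ) hmono (∑ i, a i - ℓ) (by omega)
  exact ⟨b, hb, hbsum, _, (isHomMat_monomialBidiagonal hsucc).comp_equiv σ,
    (isLocSplitInj_monomialBidiagonal hcast).comp_equiv σ⟩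

theorem exists_balanced_corank_one_subbundle
    {k : Type} [Field k] [IsAlgClosed k]
    (r : ℕ) (hr : 2 ≤ r) (a : Fin r → ℤ)
    (hbal : ∀ i j, a i ≤ a j + 1)
    (ℓ : ℤ) (hℓ : Int.fdiv (∑ i, a i) (r : ℤ) ≤ ℓ) :
    ∃ b : Fin (r - 1) → ℤ, (∀ i j, b i ≤ b j + 1) ∧
      (∑ j, b j) = (∑ i, a i) - ℓ ∧
      ∃ M : Fin r → Fin (r - 1) → MvPolynomial (Fin 2) k,
        IsHomMat a b M ∧ IsLocSplitInj M :=
  exists_balanced_corank_one_subbundle_general r hr a hbal ℓ hℓ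
end

section
/- Let E be a balanced vector bundle on P^1 and φ: E → L a sufficiently general surjection onto a vector bundle L. Then ker(φ) is balanced. -/
/-- For `M : Fin m → Fin r → Poly` representing `E → L`: full row rank at every
point of ℙ¹, i.e. a surjection of vector bundles. -/
def IsBundleSurj {k : Type} [CommRing k] {ι κ' : Type}
    (M : ι → κ' → MvPolynomial (Fin 2) k) : Prop :=
  ∀ p : Fin 2 → k, p ≠ 0 →
    LinearIndependent k fun i : ι => fun j : κ' => MvPolynomial.eval p (M i j)

namespace BKaux

open MvPolynomial Finset

variable {k : Type} [Field k]

abbrev P (k : Type) [CommRing k] := MvPolynomial (Fin 2) k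

noncomputable def mon (k : Type) [CommRing k] (A B : ℕ) : P k := X 0 ^ A * X 1 ^ B

lemma mon_hom (A B : ℕ) : (mon k A B).IsHomogeneous (A + B) := by
  have := ((isHomogeneous_X k (0 : Fin 2)).pow A).mul ((isHomogeneous_X k (1 : Fin 2)).pow B)
  simpa [mon, one_mul] using this

lemma eval_mon (pt : Fin 2 → k) (A B : ℕ) :
    MvPolynomial.eval pt (mon k A B) = pt 0 ^ A * pt 1 ^ B := by
  simp [mon]

lemma mon_mul (A B A' B' : ℕ) : mon k A B * mon k A' B' = mon k (A + A') (B + B') := by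
  simp [mon, pow_add]; ring

lemma monomial_eq_smul_mon (d : Fin 2 →₀ ℕ) (cf : k) :
    (monomial d cf : P k) = cf • mon k (d 0) (d 1) := by
  rw [monomial_eq, smul_eq_C_mul, mon]
  congr 1
  rw [Finsupp.prod_fintype _ _ (fun i => pow_zero _), Fin.prod_univ_two]

/-- sum against an indicator concentrated at value `v`. -/
lemma sum_coord {R : Type} [AddCommMonoid R] {n : ℕ} (X : Fin n → R) (v : ℕ) :
    (∑ i : Fin n, if (i : ℕ) = v then X i else 0)
      = if h : v < n then X ⟨v, h⟩ else 0 := by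
  by_cases h : v < n
  · rw [dif_pos h, Finset.sum_eq_single (⟨v, h⟩ : Fin n)]
    · simp
    · intro i _ hne
      rw [if_neg]
      intro hc
      exact hne (Fin.ext hc)
    · intro hmem
      exact absurd (Finset.mem_univ _) hmem
  · rw [dif_neg h, Finset.sum_congr rfl (fun i (_ : i ∈ Finset.univ) => if_neg (by omega))]
    simp

/-- sum against an indicator at `v = i+1`. -/
lemma sum_coord_pred {R : Type} [AddCommMonoid R] {n : ℕ} (X : Fin n → R) (v : ℕ) :
    (∑ i : Fin n, if v = (i : ℕ) + 1 then X i else 0)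
      = if h : 0 < v ∧ v - 1 < n then X ⟨v - 1, h.2⟩ else 0 := by
  by_cases h : 0 < v ∧ v - 1 < n
  · rw [dif_pos h, Finset.sum_eq_single (⟨v - 1, h.2⟩ : Fin n)]
    · rw [if_pos]
      simp
      omega
    · intro i _ hne
      rw [if_neg]
      intro hc
      apply hne
      apply Fin.ext
      simp
      omega
    · intro hmem
      exact absurd (Finset.mem_univ _) hmem
  · rw [dif_neg h, Finset.sum_congr rfl (fun i (_ : i ∈ Finset.univ) => if_neg (by omega))]
    simp

lemma card_filter_lt (K w : ℕ) (h : w ≤ K) :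
    (Finset.univ.filter (fun l : Fin K => (l : ℕ) < w)).card = w := by
  rw [← Fintype.card_subtype]
  exact Fintype.card_congr ⟨fun l => ⟨(l : Fin K), l.2⟩,
    fun x => ⟨⟨(x : ℕ), lt_of_lt_of_le x.2 h⟩, x.2⟩,
    fun l => by ext; rfl, fun x => by ext; rfl⟩ |>.trans (Fintype.card_fin w)

lemma card_filter_ge (K w : ℕ) (h : w ≤ K) :
    (Finset.univ.filter (fun l : Fin K => ¬ (l : ℕ) < w)).card = K - w := by
  have h2 := Finset.card_filter_add_card_filter_not (s := (Finset.univ : Finset (Fin K)))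
    (fun l : Fin K => (l : ℕ) < w)
  rw [card_filter_lt K w h] at h2
  simp only [Finset.card_univ, Fintype.card_fin] at h2
  omega


noncomputable def bidiag {K : ℕ} (D E : Fin K → P k) : Fin (K + 1) → Fin K → P k :=
  fun i l => (if (i : ℕ) = (l : ℕ) then D l else 0) + (if (i : ℕ) = (l : ℕ) + 1 then E l else 0)

lemma bidiag_colSum {K : ℕ} (D E : Fin K → P k) (G : Fin (K + 1) → P k) (l : Fin K) :
    (∑ i, G i * bidiag D E i l) = G l.castSucc * D l + G l.succ * E l := by
  have expand : ∀ i : Fin (K + 1), G i * bidiag D E i l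
      = (if (i : ℕ) = (l : ℕ) then G i * D l else 0)
        + (if (i : ℕ) = (l : ℕ) + 1 then G i * E l else 0) := by
    intro i
    simp only [bidiag, mul_add, mul_ite, mul_zero]
  rw [Finset.sum_congr rfl (fun i _ => expand i), Finset.sum_add_distrib,
    sum_coord (fun i => G i * D l) (l : ℕ),
    sum_coord (fun i => G i * E l) ((l : ℕ) + 1),
    dif_pos (show (l : ℕ) < K + 1 by omega), dif_pos (show (l : ℕ) + 1 < K + 1 by omega)]
  congr 2 <;> exact Fin.ext (by simp)

lemma bidiag_rowSum {K : ℕ} (D E : Fin K → P k) (pt : Fin 2 → k) (lam : Fin K → k)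
    (i : Fin (K + 1)) :
    (∑ l, lam l * MvPolynomial.eval pt (bidiag D E i l))
      = (if h : (i : ℕ) < K then lam ⟨i, h⟩ * MvPolynomial.eval pt (D ⟨i, h⟩) else 0)
        + (if h : 0 < (i : ℕ) ∧ (i : ℕ) - 1 < K then
            lam ⟨(i : ℕ) - 1, h.2⟩ * MvPolynomial.eval pt (E ⟨(i : ℕ) - 1, h.2⟩) else 0) := by
  have expand : ∀ l : Fin K, lam l * MvPolynomial.eval pt (bidiag D E i l)
      = (if (l : ℕ) = (i : ℕ) then lam l * MvPolynomial.eval pt (D l) else 0)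
        + (if (i : ℕ) = (l : ℕ) + 1 then lam l * MvPolynomial.eval pt (E l) else 0) := by
    intro l
    simp only [bidiag, map_add, apply_ite (MvPolynomial.eval pt), map_zero, mul_add, mul_ite,
      mul_zero]
    congr 1
    exact if_congr eq_comm rfl rfl
  rw [Finset.sum_congr rfl (fun l _ => expand l), Finset.sum_add_distrib,
    sum_coord (fun l => lam l * MvPolynomial.eval pt (D l)) (i : ℕ),
    sum_coord_pred (fun l => lam l * MvPolynomial.eval pt (E l)) (i : ℕ)]

lemma bidiag_li_y {K : ℕ} (D E : Fin K → P k) (pt : Fin 2 → k)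
    (hD : ∀ l, MvPolynomial.eval pt (D l) ≠ 0) :
    LinearIndependent k (fun l : Fin K => fun i : Fin (K + 1) =>
      MvPolynomial.eval pt (bidiag D E i l)) := by
  rw [Fintype.linearIndependent_iff]
  intro lam hsum
  have hco : ∀ i : Fin (K + 1), (∑ l, lam l * MvPolynomial.eval pt (bidiag D E i l)) = 0 := by
    intro i
    have := congrFun hsum i
    simpa [Finset.sum_apply, Pi.smul_apply, smul_eq_mul] using this
  have key : ∀ n : ℕ, ∀ l : Fin K, (l : ℕ) = n → lam l = 0 := by
    intro n
    induction n with
    | zero =>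
      intro l hl
      have h0 := hco l.castSucc
      rw [bidiag_rowSum] at h0
      rw [dif_pos (show ((l.castSucc : ℕ)) < K by simp only [Fin.coe_castSucc]; omega),
        dif_neg (by simp only [Fin.coe_castSucc]; omega)] at h0
      have : (⟨((l.castSucc : ℕ)), by simp only [Fin.coe_castSucc]; omega⟩ : Fin K) = l :=
        Fin.ext (by simp)
      rw [this] at h0
      rw [add_zero] at h0
      exact (mul_eq_zero.mp h0).resolve_right (hD l)
    | succ n ih =>
      intro l hl
      have h0 := hco l.castSucc
      rw [bidiag_rowSum] at h0
      rw [dif_pos (show ((l.castSucc : ℕ)) < K by simp only [Fin.coe_castSucc]; omega)] at h0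
      have e1 : (⟨((l.castSucc : ℕ)), by simp only [Fin.coe_castSucc]; omega⟩ : Fin K) = l :=
        Fin.ext (by simp)
      rw [e1] at h0
      by_cases h2 : 0 < ((l.castSucc : ℕ)) ∧ ((l.castSucc : ℕ)) - 1 < K
      · rw [dif_pos h2] at h0
        have : lam ⟨((l.castSucc : ℕ)) - 1, h2.2⟩ = 0 := by
          apply ih
          simp only [Fin.coe_castSucc]
          omega
        rw [this, zero_mul, add_zero] at h0
        exact (mul_eq_zero.mp h0).resolve_right (hD l)
      · rw [dif_neg h2, add_zero] at h0
        exact (mul_eq_zero.mp h0).resolve_right (hD l)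
  intro l
  exact key (l : ℕ) l rfl

lemma bidiag_li_x {K : ℕ} (D E : Fin K → P k) (pt : Fin 2 → k)
    (hE : ∀ l, MvPolynomial.eval pt (E l) ≠ 0) :
    LinearIndependent k (fun l : Fin K => fun i : Fin (K + 1) =>
      MvPolynomial.eval pt (bidiag D E i l)) := by
  rw [Fintype.linearIndependent_iff]
  intro lam hsum
  have hco : ∀ i : Fin (K + 1), (∑ l, lam l * MvPolynomial.eval pt (bidiag D E i l)) = 0 := by
    intro i
    have := congrFun hsum i
    simpa [Finset.sum_apply, Pi.smul_apply, smul_eq_mul] using this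
  have key : ∀ n : ℕ, ∀ l : Fin K, (l : ℕ) + n + 1 = K → lam l = 0 := by
    intro n
    induction n with
    | zero =>
      intro l hl
      have h0 := hco l.succ
      rw [bidiag_rowSum] at h0
      rw [dif_neg (show ¬ ((l.succ : ℕ)) < K by simp only [Fin.val_succ]; omega),
        dif_pos (show 0 < ((l.succ : ℕ)) ∧ ((l.succ : ℕ)) - 1 < K by
          simp only [Fin.val_succ]; omega)] at h0
      have e1 : (⟨((l.succ : ℕ)) - 1, by simp only [Fin.val_succ]; omega⟩ : Fin K) = l :=
        Fin.ext (by simp)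
      rw [e1, zero_add] at h0
      exact (mul_eq_zero.mp h0).resolve_right (hE l)
    | succ n ih =>
      intro l hl
      have h0 := hco l.succ
      rw [bidiag_rowSum] at h0
      rw [dif_pos (show ((l.succ : ℕ)) < K by simp only [Fin.val_succ]; omega),
        dif_pos (show 0 < ((l.succ : ℕ)) ∧ ((l.succ : ℕ)) - 1 < K by
          simp only [Fin.val_succ]; omega)] at h0
      have e1 : (⟨((l.succ : ℕ)) - 1, by simp only [Fin.val_succ]; omega⟩ : Fin K) = l :=
        Fin.ext (by simp)
      rw [e1] at h0
      have hnext : lam ⟨((l.succ : ℕ)), by simp only [Fin.val_succ]; omega⟩ = 0 := by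
        apply ih
        simp only [Fin.val_succ]
        omega
      rw [hnext, zero_mul, zero_add] at h0
      exact (mul_eq_zero.mp h0).resolve_right (hE l)
  intro l
  exact key (K - 1 - (l : ℕ)) l (by omega)

lemma bidiag_homMat {K : ℕ} (D E : Fin K → P k) (β : Fin (K + 1) → ℤ) (b : Fin K → ℤ)
    (hD : ∀ l, (D l).IsHomogeneous (β l.castSucc - b l).toNat)
    (hE : ∀ l, (E l).IsHomogeneous (β l.succ - b l).toNat)
    (hge : ∀ l, b l ≤ β l.castSucc ∨ D l = 0) (hge' : ∀ l, b l ≤ β l.succ ∨ E l = 0) :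
    IsHomMat β b (bidiag D E) := by
  intro i l
  by_cases h1 : (i : ℕ) = (l : ℕ)
  · have hi : i = l.castSucc := Fin.ext (by simp [h1])
    have : bidiag D E i l = D l := by
      simp only [bidiag, if_pos h1, if_neg (show ¬ (i : ℕ) = (l : ℕ) + 1 by omega), add_zero]
    rw [this, hi]
    refine ⟨hD l, fun hc => ?_⟩
    rcases hge l with hh | hh
    · exact absurd hc (by omega)
    · exact hh
  · by_cases h2 : (i : ℕ) = (l : ℕ) + 1
    · have hi : i = l.succ := Fin.ext (by simp [h2])
      have : bidiag D E i l = E l := by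
        simp only [bidiag, if_neg h1, if_pos h2, zero_add]
      rw [this, hi]
      refine ⟨hE l, fun hc => ?_⟩
      rcases hge' l with hh | hh
      · exact absurd hc (by omega)
      · exact hh
    · have : bidiag D E i l = 0 := by
        simp only [bidiag, if_neg h1, if_neg h2, add_zero]
      rw [this]
      exact ⟨MvPolynomial.isHomogeneous_zero _ _ _, fun _ => rfl⟩

lemma homMat_mul {n1 n2 n3 : ℕ} {α : Fin n1 → ℤ} {γ : Fin n2 → ℤ} {δ : Fin n3 → ℤ}
    {A : Fin n1 → Fin n2 → P k} {B : Fin n2 → Fin n3 → P k}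
    (hA : IsHomMat α γ A) (hB : IsHomMat γ δ B) :
    IsHomMat α δ (fun i l => ∑ mid, A i mid * B mid l) := by
  intro i l
  constructor
  · apply MvPolynomial.IsHomogeneous.sum
    intro mid _
    by_cases h1 : α i - γ mid < 0
    · rw [(hA i mid).2 h1, zero_mul]
      exact MvPolynomial.isHomogeneous_zero _ _ _
    · by_cases h2 : γ mid - δ l < 0
      · rw [(hB mid l).2 h2, mul_zero]
        exact MvPolynomial.isHomogeneous_zero _ _ _
      · have := (hA i mid).1.mul (hB mid l).1
        convert this using 1
        omega
  · intro hneg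
    apply Finset.sum_eq_zero
    intro mid _
    by_cases h1 : α i - γ mid < 0
    · rw [(hA i mid).2 h1, zero_mul]
    · rw [(hB mid l).2 (by omega), mul_zero]


lemma target {K : ℕ} (hK : 0 < K) (β : Fin (K + 1) → ℤ) (hanti : Antitone β)
    (hbal : ∀ i j, β i ≤ β j + 1) (C : ℤ) (hC : β 0 ≤ C) :
    ∃ b : Fin K → ℤ, Antitone b ∧ (∀ i j, b i ≤ b j + 1) ∧
      (∀ l, b l ≤ β l.succ) ∧ (∀ l, b l ≤ C) ∧
      (∑ l, b l) = (∑ i, β i) - C := by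
  set T : ℤ := (∑ i, β i) - C with hT
  set e : ℤ := T / K with he
  set h : ℕ := (T % K).toNat with hh
  have hKz : (K : ℤ) ≠ 0 := by exact_mod_cast hK.ne'
  have hKpos : (0 : ℤ) < K := by exact_mod_cast hK
  have hmodnn : (0 : ℤ) ≤ T % K := Int.emod_nonneg T hKz
  have hmodlt : T % K < K := Int.emod_lt_of_pos T hKpos
  have hcast : ((h : ℕ) : ℤ) = T % K := Int.toNat_of_nonneg hmodnn
  have hdiv : (K : ℤ) * e + (T % K) = T := Int.mul_ediv_add_emod T K
  have hhK : h < K := by omega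
  set b : Fin K → ℤ := fun l => if (l : ℕ) < h then e + 1 else e with hbdef
  have hbval : ∀ l : Fin K, b l = if (l : ℕ) < h then e + 1 else e := fun l => rfl
  have hsumb : (∑ l, b l) = T := by
    have step : ∀ l : Fin K, b l = e + (if (l : ℕ) < h then 1 else 0) := by
      intro l
      rw [hbval]
      split_ifs <;> ring
    rw [Finset.sum_congr rfl (fun l _ => step l), Finset.sum_add_distrib, Finset.sum_const,
      Finset.card_univ, Fintype.card_fin, Finset.sum_boole, card_filter_lt K h (le_of_lt hhK),
      nsmul_eq_mul]
    omega
  have hbanti : Antitone b := by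
    intro l l' hle
    have : (l : ℕ) ≤ (l' : ℕ) := hle
    rw [hbval, hbval]
    split_ifs <;> omega
  have hbbal : ∀ i j, b i ≤ b j + 1 := by
    intro i j
    rw [hbval, hbval]
    split_ifs <;> omega
  have hβle : ∀ i, β i ≤ C := fun i => le_trans (hanti (Fin.zero_le i)) hC
  have heC : e ≤ C := by
    have hsum : (∑ i, β i) ≤ (K + 1 : ℤ) * C := by
      calc (∑ i, β i) ≤ ∑ _i : Fin (K + 1), C := Finset.sum_le_sum (fun i _ => hβle i)
      _ = (K + 1 : ℤ) * C := by
        rw [Finset.sum_const, Finset.card_univ, Fintype.card_fin, nsmul_eq_mul]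
        push_cast
        ring
    have hTle : T ≤ (K : ℤ) * C := by
      have hexp : ((K : ℤ) + 1) * C = (K : ℤ) * C + C := by ring
      omega
    have h1 : T / K ≤ ((K : ℤ) * C) / K := Int.ediv_le_ediv hKpos hTle
    rwa [Int.mul_ediv_cancel_left C hKz] at h1
  have hTle : T ≤ (K : ℤ) * C := by
    have hsum : (∑ i, β i) ≤ (K + 1 : ℤ) * C := by
      calc (∑ i, β i) ≤ ∑ _i : Fin (K + 1), C := Finset.sum_le_sum (fun i _ => hβle i)
      _ = (K + 1 : ℤ) * C := by
        rw [Finset.sum_const, Finset.card_univ, Fintype.card_fin, nsmul_eq_mul]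
        push_cast
        ring
    have hexp : ((K : ℤ) + 1) * C = (K : ℤ) * C + C := by ring
    omega
  have hbC : ∀ l, b l ≤ C := by
    intro l
    rw [hbval]
    rcases lt_or_eq_of_le heC with hlt | heq
    · split_ifs <;> omega
    · rw [heq] at hdiv
      split_ifs <;> omega
  have hmain : ∀ l, b l ≤ β l.succ := by
    by_contra hcon
    push_neg at hcon
    obtain ⟨l₀, hl₀⟩ := hcon
    set bs : ℤ := β l₀.succ with hbs
    -- lower bound for the sum of b
    have hlow1 : ∀ l : Fin K, (l : ℕ) < (l₀ : ℕ) + 1 → bs + 1 ≤ b l := by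
      intro l hle
      have h1 : b l₀ ≤ b l := hbanti (by
        show l ≤ l₀
        exact Fin.le_def.mpr (by omega))
      omega
    have hlow2 : ∀ l : Fin K, bs ≤ b l := by
      intro l
      have h1 : b l₀ ≤ b l + 1 := hbbal l₀ l
      omega
    have hcard1 : ((Finset.univ.filter (fun l : Fin K => (l : ℕ) < (l₀ : ℕ) + 1)).card : ℤ)
        = (l₀ : ℕ) + 1 := by
      rw [card_filter_lt K ((l₀ : ℕ) + 1) (by omega)]
      push_cast
      ring
    have hcard2 : ((Finset.univ.filter (fun l : Fin K => ¬ (l : ℕ) < (l₀ : ℕ) + 1)).card : ℤ)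
        = (K : ℤ) - (l₀ : ℕ) - 1 := by
      rw [card_filter_ge K ((l₀ : ℕ) + 1) (by omega)]
      have : (l₀ : ℕ) + 1 ≤ K := by omega
      push_cast [Nat.cast_sub this]
      ring
    have hlower : ((l₀ : ℕ) + 1 : ℤ) * (bs + 1) + ((K : ℤ) - (l₀ : ℕ) - 1) * bs ≤ T := by
      rw [← hsumb, ← Finset.sum_filter_add_sum_filter_not Finset.univ
        (fun l : Fin K => (l : ℕ) < (l₀ : ℕ) + 1) b]
      have p1 : ((l₀ : ℕ) + 1 : ℤ) * (bs + 1)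
          ≤ ∑ l ∈ Finset.univ.filter (fun l : Fin K => (l : ℕ) < (l₀ : ℕ) + 1), b l := by
        calc ((l₀ : ℕ) + 1 : ℤ) * (bs + 1)
            = ((Finset.univ.filter (fun l : Fin K => (l : ℕ) < (l₀ : ℕ) + 1)).card : ℤ) * (bs + 1) := by
              rw [hcard1]
          _ ≤ _ := by
              rw [← nsmul_eq_mul]
              exact Finset.card_nsmul_le_sum _ _ _ (fun l hl =>
                hlow1 l (Finset.mem_filter.mp hl).2)
      have p2 : ((K : ℤ) - (l₀ : ℕ) - 1) * bs
          ≤ ∑ l ∈ Finset.univ.filter (fun l : Fin K => ¬ (l : ℕ) < (l₀ : ℕ) + 1), b l := by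
        calc ((K : ℤ) - (l₀ : ℕ) - 1) * bs
            = ((Finset.univ.filter (fun l : Fin K => ¬ (l : ℕ) < (l₀ : ℕ) + 1)).card : ℤ) * bs := by
              rw [hcard2]
          _ ≤ _ := by
              rw [← nsmul_eq_mul]
              exact Finset.card_nsmul_le_sum _ _ _ (fun l _ => hlow2 l)
      omega
    -- upper bound for T
    have hup1 : ∀ u : Fin K, β u.succ ≤ bs + 1 := fun u => hbal u.succ l₀.succ
    have hup2 : ∀ u : Fin K, (l₀ : ℕ) ≤ (u : ℕ) → β u.succ ≤ bs := by
      intro u hu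
      exact hanti (Fin.le_def.mpr (by simp [Fin.val_succ]; omega))
    have hcard3 : ((Finset.univ.filter (fun u : Fin K => (u : ℕ) < (l₀ : ℕ))).card : ℤ)
        = (l₀ : ℕ) := by
      rw [card_filter_lt K (l₀ : ℕ) (by omega)]
    have hcard4 : ((Finset.univ.filter (fun u : Fin K => ¬ (u : ℕ) < (l₀ : ℕ))).card : ℤ)
        = (K : ℤ) - (l₀ : ℕ) := by
      rw [card_filter_ge K (l₀ : ℕ) (by omega)]
      have : (l₀ : ℕ) ≤ K := by omega
      push_cast [Nat.cast_sub this]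
      ring
    have hupper : T ≤ ((l₀ : ℕ) : ℤ) * (bs + 1) + ((K : ℤ) - (l₀ : ℕ)) * bs := by
      have hsplit : (∑ i, β i) = β 0 + ∑ u : Fin K, β u.succ := Fin.sum_univ_succ β
      have hsum2 : (∑ u : Fin K, β u.succ)
          ≤ ((l₀ : ℕ) : ℤ) * (bs + 1) + ((K : ℤ) - (l₀ : ℕ)) * bs := by
        rw [← Finset.sum_filter_add_sum_filter_not Finset.univ
          (fun u : Fin K => (u : ℕ) < (l₀ : ℕ)) (fun u => β u.succ)]
        have p1 : (∑ u ∈ Finset.univ.filter (fun u : Fin K => (u : ℕ) < (l₀ : ℕ)), β u.succ)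
            ≤ ((l₀ : ℕ) : ℤ) * (bs + 1) := by
          calc (∑ u ∈ Finset.univ.filter (fun u : Fin K => (u : ℕ) < (l₀ : ℕ)), β u.succ)
              ≤ ∑ _u ∈ Finset.univ.filter (fun u : Fin K => (u : ℕ) < (l₀ : ℕ)), (bs + 1) :=
                Finset.sum_le_sum (fun u _ => hup1 u)
            _ = ((l₀ : ℕ) : ℤ) * (bs + 1) := by
                rw [Finset.sum_const, nsmul_eq_mul, hcard3]
        have p2 : (∑ u ∈ Finset.univ.filter (fun u : Fin K => ¬ (u : ℕ) < (l₀ : ℕ)), β u.succ)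
            ≤ ((K : ℤ) - (l₀ : ℕ)) * bs := by
          calc (∑ u ∈ Finset.univ.filter (fun u : Fin K => ¬ (u : ℕ) < (l₀ : ℕ)), β u.succ)
              ≤ ∑ _u ∈ Finset.univ.filter (fun u : Fin K => ¬ (u : ℕ) < (l₀ : ℕ)), bs :=
                Finset.sum_le_sum (fun u hu => hup2 u (by
                  have := (Finset.mem_filter.mp hu).2
                  omega))
            _ = ((K : ℤ) - (l₀ : ℕ)) * bs := by
                rw [Finset.sum_const, nsmul_eq_mul, hcard4]
        omega
      have hCge : β 0 ≤ C := hC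
      omega
    have e1 : ((l₀ : ℕ) + 1 : ℤ) * (bs + 1) + ((K : ℤ) - (l₀ : ℕ) - 1) * bs
        = (K : ℤ) * bs + (l₀ : ℕ) + 1 := by ring
    have e2 : ((l₀ : ℕ) : ℤ) * (bs + 1) + ((K : ℤ) - (l₀ : ℕ)) * bs
        = (K : ℤ) * bs + (l₀ : ℕ) := by ring
    omega
  exact ⟨b, hbanti, hbbal, hmain, hbC, hsumb⟩


lemma fin2_degree (d : Fin 2 →₀ ℕ) : d.degree = d 0 + d 1 := by
  rw [Finsupp.degree_eq_weight_one, Finsupp.weight_apply, Finsupp.sum_fintype, Fin.sum_univ_two]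
  · simp
  · simp

lemma smul_mon_hom (cf : k) (A B n : ℕ) (h : A + B = n) :
    (cf • mon k A B).IsHomogeneous n := by
  rw [smul_eq_C_mul]
  have := (isHomogeneous_C (Fin 2) cf).mul (mon_hom (k := k) A B)
  simpa [h] using this

/-- The staircase construction: case `β 0 ≤ C`. -/
lemma stairA {K : ℕ} (hK : 0 < K) (β : Fin (K + 1) → ℤ) (hanti : Antitone β)
    (hbal : ∀ i j, β i ≤ β j + 1) (C : ℤ) (hC : β 0 ≤ C) :
    ∃ (b : Fin K → ℤ) (f : Fin (K + 1) → P k) (N : Fin (K + 1) → Fin K → P k),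
      Antitone b ∧ (∀ i j, b i ≤ b j + 1) ∧
      (∀ l, b l ≤ C) ∧
      (∀ i, (f i).IsHomogeneous (C - β i).toNat ∧ (C - β i < 0 → f i = 0)) ∧
      (∀ pt : Fin 2 → k, pt ≠ 0 → ∃ i, MvPolynomial.eval pt (f i) ≠ 0) ∧
      IsHomMat β b N ∧ IsLocSplitInj N ∧
      (∀ l, (∑ i, f i * N i l) = 0) ∧
      (∀ C' : ℤ, C ≤ C' → ∀ φ : Fin K → P k,
        (∀ l, (φ l).IsHomogeneous (C' - b l).toNat ∧ (C' - b l < 0 → φ l = 0)) →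
        ∃ g : Fin (K + 1) → P k,
          (∀ i, (g i).IsHomogeneous (C' - β i).toNat ∧ (C' - β i < 0 → g i = 0)) ∧
          (∀ l, (∑ i, g i * N i l) = φ l)) := by
  have hβC : ∀ i, β i ≤ C := fun i => le_trans (hanti (Fin.zero_le i)) hC
  obtain ⟨b, hbanti, hbbal, hbsucc, hbC, hbsum⟩ := target hK β hanti hbal C hC
  have hbcs : ∀ l, b l ≤ β l.castSucc := fun l =>
    le_trans (hbsucc l) (hanti (by
      rw [Fin.le_def]
      simp [Fin.coe_castSucc, Fin.val_succ]))
  set s : Fin K → ℕ := fun l => (β l.castSucc - b l).toNat with hsdef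
  set t : Fin K → ℕ := fun l => (β l.succ - b l).toNat with htdef
  have hsZ : ∀ l, ((s l : ℕ) : ℤ) = β l.castSucc - b l := fun l =>
    Int.toNat_of_nonneg (by have := hbcs l; omega)
  have htZ : ∀ l, ((t l : ℕ) : ℤ) = β l.succ - b l := fun l =>
    Int.toNat_of_nonneg (by have := hbsucc l; omega)
  set q : Fin (K + 1) → ℕ := fun i => ∑ l ∈ Finset.univ.filter (fun l : Fin K => (l : ℕ) < (i : ℕ)), s l with hqdef
  set p : Fin (K + 1) → ℕ := fun i => ∑ l ∈ Finset.univ.filter (fun l : Fin K => (i : ℕ) ≤ (l : ℕ)), t l with hpdef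
  have hq0 : q 0 = 0 :=
    Finset.sum_eq_zero (fun l hl => by
      have hmem := (Finset.mem_filter.mp hl).2
      simp only [Fin.val_zero] at hmem
      exact absurd hmem (by omega))
  have hplast : p (Fin.last K) = 0 :=
    Finset.sum_eq_zero (fun l hl => absurd (Finset.mem_filter.mp hl).2 (by
      simp only [Fin.val_last]
      omega))
  have hqsucc : ∀ l : Fin K, q l.succ = q l.castSucc + s l := by
    intro l
    have hset : Finset.univ.filter (fun x : Fin K => (x : ℕ) < (l.succ : ℕ))
        = insert l (Finset.univ.filter (fun x : Fin K => (x : ℕ) < (l.castSucc : ℕ))) := by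
      ext x
      simp only [Finset.mem_filter, Finset.mem_insert, Finset.mem_univ, true_and,
        Fin.val_succ, Fin.coe_castSucc, Fin.ext_iff]
      omega
    rw [show q l.succ = ∑ x ∈ Finset.univ.filter (fun x : Fin K => (x : ℕ) < (l.succ : ℕ)), s x from rfl,
      hset, Finset.sum_insert (by
        simp only [Finset.mem_filter, Finset.mem_univ, true_and, Fin.coe_castSucc]
        omega)]
    exact Nat.add_comm _ _
  have hpsucc : ∀ l : Fin K, p l.castSucc = t l + p l.succ := by
    intro l
    have hset : Finset.univ.filter (fun x : Fin K => ((l.castSucc : ℕ)) ≤ (x : ℕ))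
        = insert l (Finset.univ.filter (fun x : Fin K => ((l.succ : ℕ)) ≤ (x : ℕ))) := by
      ext x
      simp only [Finset.mem_filter, Finset.mem_insert, Finset.mem_univ, true_and,
        Fin.val_succ, Fin.coe_castSucc, Fin.ext_iff]
      omega
    rw [show p l.castSucc = ∑ x ∈ Finset.univ.filter (fun x : Fin K => ((l.castSucc : ℕ)) ≤ (x : ℕ)), t x from rfl,
      hset, Finset.sum_insert (by
        simp only [Finset.mem_filter, Finset.mem_univ, true_and, Fin.val_succ]
        omega)]
  have hqmono : ∀ i i' : Fin (K + 1), (i : ℕ) ≤ (i' : ℕ) → q i ≤ q i' := by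
    intro i i' hii
    apply Finset.sum_le_sum_of_subset
    intro x hx
    simp only [Finset.mem_filter, Finset.mem_univ, true_and] at hx ⊢
    omega
  have hpmono : ∀ i i' : Fin (K + 1), (i : ℕ) ≤ (i' : ℕ) → p i' ≤ p i := by
    intro i i' hii
    apply Finset.sum_le_sum_of_subset
    intro x hx
    simp only [Finset.mem_filter, Finset.mem_univ, true_and] at hx ⊢
    omega
  have hpq : ∀ i, ((p i : ℕ) : ℤ) + ((q i : ℕ) : ℤ) = C - β i := by
    intro i
    have hsplit : ((q i : ℕ) : ℤ) + ((p i : ℕ) : ℤ)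
        = ∑ l : Fin K, (if (l : ℕ) < (i : ℕ) then ((s l : ℕ) : ℤ) else ((t l : ℕ) : ℤ)) := by
      rw [Finset.sum_ite,
        show q i = ∑ l ∈ Finset.univ.filter (fun l : Fin K => (l : ℕ) < (i : ℕ)), s l from rfl,
        show p i = ∑ l ∈ Finset.univ.filter (fun l : Fin K => (i : ℕ) ≤ (l : ℕ)), t l from rfl,
        Nat.cast_sum, Nat.cast_sum]
      congr 1
      apply Finset.sum_congr
      · apply Finset.filter_congr
        intro x _
        omega
      · intro x _
        rfl
    have hterm : ∀ l : Fin K, (if (l : ℕ) < (i : ℕ) then ((s l : ℕ) : ℤ) else ((t l : ℕ) : ℤ))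
        = β (i.succAbove l) - b l := by
      intro l
      by_cases hl : (l : ℕ) < (i : ℕ)
      · rw [if_pos hl, hsZ, Fin.succAbove_of_castSucc_lt _ _ (by
          rw [Fin.lt_def]
          simpa using hl)]
      · rw [if_neg hl, htZ, Fin.succAbove_of_le_castSucc _ _ (by
          rw [Fin.le_def]
          simpa using (by omega : (i : ℕ) ≤ (l : ℕ)))]
    have hsum2 : (∑ l : Fin K, (β (i.succAbove l) - b l))
        = ((∑ j, β j) - β i) - ((∑ j, β j) - C) := by
      rw [Finset.sum_sub_distrib, hbsum]
      have := Fin.sum_univ_succAbove β i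
      omega
    rw [Finset.sum_congr rfl (fun l _ => hterm l), hsum2] at hsplit
    omega
  set D : Fin K → P k := fun l => mon k 0 (s l) with hDdef
  set E : Fin K → P k := fun l => -(mon k (t l) 0) with hEdef
  set N : Fin (K + 1) → Fin K → P k := bidiag D E with hNdef
  set f : Fin (K + 1) → P k := fun i => mon k (p i) (q i) with hfdef
  have hfhom : ∀ i, (f i).IsHomogeneous (C - β i).toNat ∧ (C - β i < 0 → f i = 0) := by
    intro i
    constructor
    · have hdeg : (C - β i).toNat = p i + q i := by
        have := hpq i
        have hge : 0 ≤ C - β i := by have := hβC i; omega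
        omega
      rw [hdeg]
      exact mon_hom (k := k) (p i) (q i)
    · intro hc
      exact absurd hc (by have := hβC i; omega)
  have hfnz : ∀ pt : Fin 2 → k, pt ≠ 0 → ∃ i, MvPolynomial.eval pt (f i) ≠ 0 := by
    intro pt hpt
    have hnz : pt 0 ≠ 0 ∨ pt 1 ≠ 0 := by
      by_contra hcc
      push_neg at hcc
      apply hpt
      funext i
      fin_cases i
      · exact hcc.1
      · exact hcc.2
    rcases hnz with hx | hy
    · refine ⟨0, ?_⟩
      rw [show f 0 = mon k (p 0) (q 0) from rfl, eval_mon, hq0]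
      simpa using pow_ne_zero _ hx
    · refine ⟨Fin.last K, ?_⟩
      rw [show f (Fin.last K) = mon k (p (Fin.last K)) (q (Fin.last K)) from rfl, eval_mon, hplast]
      simpa using pow_ne_zero _ hy
  have hNhom : IsHomMat β b N := by
    apply bidiag_homMat
    · intro l
      have hdeg : (β l.castSucc - b l).toNat = 0 + s l := by
        have := hsZ l
        omega
      rw [hdeg]
      exact mon_hom (k := k) 0 (s l)
    · intro l
      have hdeg : (β l.succ - b l).toNat = t l + 0 := by
        have := htZ l
        omega
      rw [hdeg]
      exact (mon_hom (k := k) (t l) 0).neg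
    · exact fun l => Or.inl (hbcs l)
    · exact fun l => Or.inl (hbsucc l)
  have hfN : ∀ l, (∑ i, f i * N i l) = 0 := by
    intro l
    rw [show (∑ i, f i * N i l) = ∑ i, f i * bidiag D E i l from rfl, bidiag_colSum]
    rw [show D l = mon k 0 (s l) from rfl, show E l = -(mon k (t l) 0) from rfl]
    rw [show f l.castSucc = mon k (p l.castSucc) (q l.castSucc) from rfl,
      show f l.succ = mon k (p l.succ) (q l.succ) from rfl]
    rw [mul_neg, mon_mul, mon_mul]
    have hex : mon k (p l.castSucc + 0) (q l.castSucc + s l) = mon k (p l.succ + t l) (q l.succ + 0) := by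
      have h1 := hpsucc l
      have h2 := hqsucc l
      congr 1 <;> omega
    rw [hex, add_neg_cancel]
  have hNinj : IsLocSplitInj N := by
    intro pt hpt
    have hnz : pt 0 ≠ 0 ∨ pt 1 ≠ 0 := by
      by_contra hcc
      push_neg at hcc
      apply hpt
      funext i
      fin_cases i
      · exact hcc.1
      · exact hcc.2
    rcases hnz with hx | hy
    · exact bidiag_li_x D E pt (fun l => by
        rw [show E l = -(mon k (t l) 0) from rfl, map_neg, eval_mon]
        simpa using pow_ne_zero _ hx)
    · exact bidiag_li_y D E pt (fun l => by
        rw [show D l = mon k 0 (s l) from rfl, eval_mon]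
        simpa using pow_ne_zero _ hy)
  have hkey : ∀ l₀ : Fin K, ((p l₀.castSucc : ℕ) : ℤ) + ((q l₀.succ : ℕ) : ℤ) = C - b l₀ := by
    intro l₀
    have h1 := hpq l₀.castSucc
    have h2 := hqsucc l₀
    have h3 := hsZ l₀
    omega
  have liftAtom : ∀ C' : ℤ, C ≤ C' → ∀ (l₀ : Fin K) (cf : k) (A B : ℕ),
      (A : ℤ) + (B : ℤ) = C' - b l₀ →
      ∃ g : Fin (K + 1) → P k,
        (∀ i, (g i).IsHomogeneous (C' - β i).toNat) ∧
        (∀ l, (∑ i, g i * N i l) = if l = l₀ then cf • mon k A B else 0) := by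
    intro C' hC' l₀ cf A B hd
    by_cases hA : p l₀.castSucc ≤ A
    · -- propagate downwards
      set g : Fin (K + 1) → P k := fun i => if (l₀ : ℕ) < (i : ℕ) then
          -(cf • mon k (A - p l₀.castSucc + p i) (B + (q i - q l₀.succ))) else 0 with hgdef
      have hgval : ∀ i, g i = if (l₀ : ℕ) < (i : ℕ) then
          -(cf • mon k (A - p l₀.castSucc + p i) (B + (q i - q l₀.succ))) else 0 := fun i => rfl
      refine ⟨g, ?_, ?_⟩
      · intro i
        rw [hgval]
        by_cases hi : (l₀ : ℕ) < (i : ℕ)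
        · rw [if_pos hi]
          apply MvPolynomial.IsHomogeneous.neg
          apply smul_mon_hom
          have hqge : q l₀.succ ≤ q i := hqmono _ _ (by simp only [Fin.val_succ]; omega)
          have h1 := hpq i
          have h2 := hkey l₀
          have h3 : 0 ≤ C' - β i := by have := hβC i; omega
          omega
        · rw [if_neg hi]
          exact MvPolynomial.isHomogeneous_zero _ _ _
      · intro l
        rw [hNdef, bidiag_colSum, hgval, hgval]
        rcases lt_trichotomy ((l : ℕ)) ((l₀ : ℕ)) with hlt | heq | hgt
        · rw [if_neg (by simp only [Fin.coe_castSucc]; omega),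
            if_neg (by simp only [Fin.val_succ]; omega),
            if_neg (show ¬ l = l₀ from fun hh => by rw [hh] at hlt; omega)]
          ring
        · have hfeq : l = l₀ := Fin.ext heq
          subst hfeq
          rw [if_neg (by simp only [Fin.coe_castSucc]; omega),
            if_pos (by simp only [Fin.val_succ]; omega), if_pos rfl]
          rw [show E l = -(mon k (t l) 0) from rfl]
          rw [zero_mul, zero_add, neg_mul_neg, smul_mul_assoc, mon_mul]
          congr 2
          · have h1 := hpsucc l
            omega
          · omega
        · rw [if_pos (by simp only [Fin.coe_castSucc]; omega),
            if_pos (by simp only [Fin.val_succ]; omega),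
            if_neg (show ¬ l = l₀ from fun hh => by rw [hh] at hgt; omega)]
          rw [show D l = mon k 0 (s l) from rfl, show E l = -(mon k (t l) 0) from rfl]
          rw [neg_mul, neg_mul_neg, smul_mul_assoc, smul_mul_assoc, mon_mul, mon_mul]
          have hexp : mon k (A - p l₀.castSucc + p l.castSucc + 0) (B + (q l.castSucc - q l₀.succ) + s l)
              = mon k (A - p l₀.castSucc + p l.succ + t l) (B + (q l.succ - q l₀.succ) + 0) := by
            have h1 := hpsucc l
            have h2 := hqsucc l
            have h3 : q l₀.succ ≤ q l.castSucc := hqmono _ _ (by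
              simp only [Fin.val_succ, Fin.coe_castSucc]
              omega)
            have h4 : p l.castSucc ≤ p l₀.castSucc := hpmono _ _ (by
              simp only [Fin.coe_castSucc]
              omega)
            congr 1 <;> omega
          rw [hexp, neg_add_cancel]
    · -- propagate upwards
      have hBge : q l₀.succ ≤ B := by
        have h2 := hkey l₀
        omega
      set g : Fin (K + 1) → P k := fun i => if (i : ℕ) ≤ (l₀ : ℕ) then
          cf • mon k (A + (p i - p l₀.castSucc)) (B - (q l₀.succ - q i)) else 0 with hgdef
      have hgval : ∀ i, g i = if (i : ℕ) ≤ (l₀ : ℕ) then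
          cf • mon k (A + (p i - p l₀.castSucc)) (B - (q l₀.succ - q i)) else 0 := fun i => rfl
      refine ⟨g, ?_, ?_⟩
      · intro i
        rw [hgval]
        by_cases hi : (i : ℕ) ≤ (l₀ : ℕ)
        · rw [if_pos hi]
          apply smul_mon_hom
          have hqle : q i ≤ q l₀.succ := hqmono _ _ (by simp only [Fin.val_succ]; omega)
          have hple : p l₀.castSucc ≤ p i := hpmono _ _ (by simp only [Fin.coe_castSucc]; omega)
          have h1 := hpq i
          have h2 := hkey l₀
          have h3 : 0 ≤ C' - β i := by have := hβC i; omega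
          omega
        · rw [if_neg hi]
          exact MvPolynomial.isHomogeneous_zero _ _ _
      · intro l
        rw [hNdef, bidiag_colSum, hgval, hgval]
        rcases lt_trichotomy ((l : ℕ)) ((l₀ : ℕ)) with hlt | heq | hgt
        · rw [if_pos (by simp only [Fin.coe_castSucc]; omega),
            if_pos (by simp only [Fin.val_succ]; omega),
            if_neg (show ¬ l = l₀ from fun hh => by rw [hh] at hlt; omega)]
          rw [show D l = mon k 0 (s l) from rfl, show E l = -(mon k (t l) 0) from rfl]
          rw [mul_neg, smul_mul_assoc, smul_mul_assoc, mon_mul, mon_mul]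
          have hexp : mon k (A + (p l.castSucc - p l₀.castSucc) + 0) (B - (q l₀.succ - q l.castSucc) + s l)
              = mon k (A + (p l.succ - p l₀.castSucc) + t l) (B - (q l₀.succ - q l.succ) + 0) := by
            have h1 := hpsucc l
            have h2 := hqsucc l
            have h3 : q l.succ ≤ q l₀.succ := hqmono _ _ (by
              simp only [Fin.val_succ]
              omega)
            have h4 : p l₀.castSucc ≤ p l.succ := hpmono _ _ (by
              simp only [Fin.val_succ, Fin.coe_castSucc]
              omega)
            congr 1 <;> omega
          rw [hexp, add_neg_cancel]
        · have hfeq : l = l₀ := Fin.ext heq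
          subst hfeq
          rw [if_pos (by simp only [Fin.coe_castSucc]; omega),
            if_neg (by simp only [Fin.val_succ]; omega), if_pos rfl]
          rw [show D l = mon k 0 (s l) from rfl]
          rw [zero_mul, add_zero, smul_mul_assoc, mon_mul]
          congr 2
          · omega
          · have h2 := hqsucc l
            omega
        · rw [if_neg (by simp only [Fin.coe_castSucc]; omega),
            if_neg (by simp only [Fin.val_succ]; omega),
            if_neg (show ¬ l = l₀ from fun hh => by rw [hh] at hgt; omega)]
          ring
  have hlift : ∀ C' : ℤ, C ≤ C' → ∀ φ : Fin K → P k,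
      (∀ l, (φ l).IsHomogeneous (C' - b l).toNat ∧ (C' - b l < 0 → φ l = 0)) →
      ∃ g : Fin (K + 1) → P k,
        (∀ i, (g i).IsHomogeneous (C' - β i).toNat ∧ (C' - β i < 0 → g i = 0)) ∧
        (∀ l, (∑ i, g i * N i l) = φ l) := by
    intro C' hC'
    suffices H : ∀ n : ℕ, ∀ φ : Fin K → P k, (∑ l, (φ l).support.card) = n →
        (∀ l, (φ l).IsHomogeneous (C' - b l).toNat) →
        ∃ g : Fin (K + 1) → P k,
          (∀ i, (g i).IsHomogeneous (C' - β i).toNat) ∧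
          (∀ l, (∑ i, g i * N i l) = φ l) by
      intro φ hφ
      obtain ⟨g, hg1, hg2⟩ := H _ φ rfl (fun l => (hφ l).1)
      exact ⟨g, fun i => ⟨hg1 i, fun hc => absurd hc (by have := hβC i; omega)⟩, hg2⟩
    intro n
    induction n using Nat.strong_induction_on with
    | _ n ih =>
      intro φ hn hφ
      by_cases h0 : ∀ l, φ l = 0
      · refine ⟨0, fun i => MvPolynomial.isHomogeneous_zero _ _ _, fun l => by
          simp [h0 l]⟩
      · push_neg at h0
        obtain ⟨l₀, hl₀⟩ := h0
        obtain ⟨d, hd⟩ := MvPolynomial.support_nonempty.mpr hl₀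
        set cf : k := MvPolynomial.coeff d (φ l₀) with hcfdef
        have hcf : cf ≠ 0 := MvPolynomial.mem_support_iff.mp hd
        have hbl : 0 ≤ C' - b l₀ := by have := hbC l₀; omega
        have hdeg : ((d 0 : ℕ) : ℤ) + ((d 1 : ℕ) : ℤ) = C' - b l₀ := by
          have hw := (hφ l₀) hcf
          rw [Finsupp.weight_apply, Finsupp.sum_fintype, Fin.sum_univ_two] at hw
          · simp only [smul_eq_mul, Pi.one_apply, mul_one] at hw
            omega
          · simp
        obtain ⟨g1, hg1h, hg1e⟩ := liftAtom C' hC' l₀ cf (d 0) (d 1) hdeg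
        set φ' : Fin K → P k := fun l => if l = l₀ then φ l₀ - MvPolynomial.monomial d cf else φ l
          with hφ'def
        have hφ'val : ∀ l, φ' l = if l = l₀ then φ l₀ - MvPolynomial.monomial d cf else φ l :=
          fun l => rfl
        have hsupp : (φ l₀ - MvPolynomial.monomial d cf).support = (φ l₀).support.erase d := by
          ext d'
          simp only [MvPolynomial.mem_support_iff, Finset.mem_erase, MvPolynomial.coeff_sub,
            MvPolynomial.coeff_monomial]
          by_cases hdd : d = d'
          · subst hdd
            simp [hcfdef]
          · simp [hdd, Ne.symm hdd]
        have hcard : (∑ l, (φ' l).support.card) < n := by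
          rw [← hn]
          apply Finset.sum_lt_sum
          · intro l _
            rw [hφ'val]
            by_cases hl : l = l₀
            · subst hl
              rw [if_pos rfl, hsupp]
              exact Finset.card_le_card (Finset.erase_subset _ _)
            · rw [if_neg hl]
          · refine ⟨l₀, Finset.mem_univ _, ?_⟩
            rw [hφ'val, if_pos rfl, hsupp]
            exact Finset.card_erase_lt_of_mem hd
        have hφ'hom : ∀ l, (φ' l).IsHomogeneous (C' - b l).toNat := by
          intro l
          rw [hφ'val]
          by_cases hl : l = l₀
          · subst hl
            rw [if_pos rfl]
            apply (hφ _).sub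
            apply MvPolynomial.isHomogeneous_monomial
            rw [fin2_degree]
            omega
          · rw [if_neg hl]
            exact hφ l
        obtain ⟨g2, hg2h, hg2e⟩ := ih _ hcard φ' rfl hφ'hom
        refine ⟨fun i => g1 i + g2 i, fun i => (hg1h i).add (hg2h i), ?_⟩
        intro l
        have hdist : (∑ i, (g1 i + g2 i) * N i l) = (∑ i, g1 i * N i l) + (∑ i, g2 i * N i l) := by
          rw [← Finset.sum_add_distrib]
          exact Finset.sum_congr rfl (fun i _ => by ring)
        rw [hdist, hg1e l, hg2e l, hφ'val]
        by_cases hl : l = l₀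
        · subst hl
          rw [if_pos rfl, if_pos rfl, monomial_eq_smul_mon]
          ring
        · rw [if_neg hl, if_neg hl, zero_add]
  refine ⟨b, f, N, hbanti, hbbal, hbC, hfhom, hfnz, hNhom, hNinj, hfN, hlift⟩


/-- The staircase construction: degenerate case `C < β 0`. -/
lemma stairB {K : ℕ} (hK : 0 < K) (β : Fin (K + 1) → ℤ) (hanti : Antitone β)
    (hbal : ∀ i j, β i ≤ β j + 1) (C : ℤ) (hCl : C < β 0) (hCr : β (Fin.last K) ≤ C) :
    ∃ (b : Fin K → ℤ) (f : Fin (K + 1) → P k) (N : Fin (K + 1) → Fin K → P k),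
      Antitone b ∧ (∀ i j, b i ≤ b j + 1) ∧
      b ⟨0, hK⟩ = β 0 ∧
      (b ⟨K - 1, by omega⟩ ≤ C
        ∨ (Finset.univ.filter (fun i : Fin (K + 1) => β i < β 0)).card = 1) ∧
      ((Finset.univ.filter (fun l : Fin K => b l < β 0)).card + 1
        = (Finset.univ.filter (fun i : Fin (K + 1) => β i < β 0)).card) ∧
      (∀ i, (f i).IsHomogeneous (C - β i).toNat ∧ (C - β i < 0 → f i = 0)) ∧
      (∀ pt : Fin 2 → k, pt ≠ 0 → ∃ i, MvPolynomial.eval pt (f i) ≠ 0) ∧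
      IsHomMat β b N ∧ IsLocSplitInj N ∧
      (∀ l, (∑ i, f i * N i l) = 0) ∧
      (∀ C' : ℤ, C ≤ C' → ∀ φ : Fin K → P k,
        (∀ l, (φ l).IsHomogeneous (C' - b l).toNat ∧ (C' - b l < 0 → φ l = 0)) →
        ∃ g : Fin (K + 1) → P k,
          (∀ i, (g i).IsHomogeneous (C' - β i).toNat ∧ (C' - β i < 0 → g i = 0)) ∧
          (∀ l, (∑ i, g i * N i l) = φ l)) := by
  have hβ0 : β 0 = C + 1 := by
    have h1 := hbal 0 (Fin.last K)
    omega
  set S : Finset (Fin (K + 1)) := Finset.univ.filter (fun i => β i ≤ C) with hSdef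
  have hSne : S.Nonempty := ⟨Fin.last K, by
    rw [hSdef, Finset.mem_filter]
    exact ⟨Finset.mem_univ _, hCr⟩⟩
  set i₀ : Fin (K + 1) := S.min' hSne with hi₀def
  set w : ℕ := (i₀ : ℕ) with hwdef
  have hi₀mem : β i₀ ≤ C := (Finset.mem_filter.mp (S.min'_mem hSne)).2
  have hw2 : ∀ i : Fin (K + 1), w ≤ (i : ℕ) → β i ≤ C :=
    fun i hi => le_trans (hanti (Fin.le_def.mpr hi)) hi₀mem
  have hw1 : ∀ i : Fin (K + 1), (i : ℕ) < w → C < β i := by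
    intro i hi
    by_contra hcc
    push_neg at hcc
    have : i₀ ≤ i := S.min'_le i (by
      rw [hSdef, Finset.mem_filter]
      exact ⟨Finset.mem_univ _, hcc⟩)
    rw [Fin.le_def] at this
    omega
  have hlo : ∀ i : Fin (K + 1), w ≤ (i : ℕ) → β i = C := by
    intro i hi
    have h1 := hw2 i hi
    have h2 := hbal 0 i
    omega
  have hhi : ∀ i : Fin (K + 1), (i : ℕ) < w → β i = C + 1 := by
    intro i hi
    have h1 := hw1 i hi
    have h2 : β i ≤ β 0 := hanti (Fin.zero_le i)
    omega
  have hw0 : 0 < w := by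
    by_contra hcc
    push_neg at hcc
    have := hw2 0 (by omega)
    omega
  have hwK : w ≤ K := by
    have := i₀.isLt
    omega
  set b : Fin K → ℤ := fun l => if (l : ℕ) < w then β l.castSucc else C with hbdef
  have hbval : ∀ l : Fin K, b l = if (l : ℕ) < w then β l.castSucc else C := fun l => rfl
  have hbhi : ∀ l : Fin K, (l : ℕ) < w → b l = C + 1 := by
    intro l hl
    rw [hbval, if_pos hl]
    exact hhi l.castSucc (by simpa using hl)
  have hblo : ∀ l : Fin K, w ≤ (l : ℕ) → b l = C := by
    intro l hl
    rw [hbval, if_neg (by omega)]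
  set D : Fin K → P k := fun _ => (1 : P k) with hDdef
  set E : Fin K → P k := fun l => if w ≤ (l : ℕ) then (-1 : P k) else 0 with hEdef
  set N : Fin (K + 1) → Fin K → P k := bidiag D E with hNdef
  set f : Fin (K + 1) → P k := fun i => if w ≤ (i : ℕ) then (1 : P k) else 0 with hfdef
  have hcount1 : (Finset.univ.filter (fun i : Fin (K + 1) => β i < β 0)).card = K + 1 - w := by
    rw [Finset.filter_congr (fun i (_ : i ∈ Finset.univ) => show (β i < β 0) ↔ ¬ (i : ℕ) < w by
      constructor
      · intro h1 h2
        have := hhi i h2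
        omega
      · intro h1
        have := hlo i (by omega)
        omega)]
    exact card_filter_ge (K + 1) w (by omega)
  have hcount2 : (Finset.univ.filter (fun l : Fin K => b l < β 0)).card = K - w := by
    rw [Finset.filter_congr (fun l (_ : l ∈ Finset.univ) => show (b l < β 0) ↔ ¬ (l : ℕ) < w by
      constructor
      · intro h1 h2
        have := hbhi l h2
        omega
      · intro h1
        have := hblo l (by omega)
        omega)]
    exact card_filter_ge K w hwK
  refine ⟨b, f, N, ?_, ?_, ?_, ?_, ?_, ?_, ?_, ?_, ?_, ?_, ?_⟩
  · -- antitone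
    intro l l' hle
    have hv : (l : ℕ) ≤ (l' : ℕ) := hle
    rw [hbval, hbval]
    by_cases h1 : (l' : ℕ) < w
    · rw [if_pos h1, if_pos (by omega)]
      exact hanti (by rw [Fin.le_def]; simpa using hv)
    · rw [if_neg h1]
      by_cases h2 : (l : ℕ) < w
      · rw [if_pos h2]
        have := hhi l.castSucc (by simpa using h2)
        omega
      · rw [if_neg h2]
  · -- balanced
    intro i j
    by_cases h1 : (i : ℕ) < w
    · have := hbhi i h1
      by_cases h2 : (j : ℕ) < w
      · have := hbhi j h2
        omega
      · have := hblo j (by omega)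
        omega
    · have := hblo i (by omega)
      by_cases h2 : (j : ℕ) < w
      · have := hbhi j h2
        omega
      · have := hblo j (by omega)
        omega
  · -- b 0 = β 0
    have h0 : ((⟨0, hK⟩ : Fin K) : ℕ) < w := hw0
    rw [hbval, if_pos h0]
    exact congrArg β (Fin.ext (by simp))
  · -- last clause
    by_cases hlast : w ≤ K - 1
    · left
      have := hblo ⟨K - 1, by omega⟩ (by simpa using hlast)
      omega
    · right
      rw [hcount1]
      omega
  · -- count clause
    rw [hcount1, hcount2]
    omega
  · -- f homogeneity
    intro i
    by_cases hi : w ≤ (i : ℕ)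
    · have hd : (C - β i).toNat = 0 := by
        have := hlo i hi
        omega
      rw [show f i = if w ≤ (i : ℕ) then (1 : P k) else 0 from rfl, if_pos hi, hd]
      refine ⟨MvPolynomial.isHomogeneous_one _ _, fun hc => ?_⟩
      have := hlo i hi
      omega
    · rw [show f i = if w ≤ (i : ℕ) then (1 : P k) else 0 from rfl, if_neg hi]
      exact ⟨MvPolynomial.isHomogeneous_zero _ _ _, fun _ => rfl⟩
  · -- f nonzero
    intro pt _
    refine ⟨Fin.last K, ?_⟩
    rw [show f (Fin.last K) = if w ≤ ((Fin.last K : Fin (K + 1)) : ℕ) then (1 : P k) else 0 from rfl,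
      if_pos (by simp only [Fin.val_last]; omega)]
    simp
  · -- IsHomMat
    apply bidiag_homMat
    · intro l
      have hd : (β l.castSucc - b l).toNat = 0 := by
        by_cases hl : (l : ℕ) < w
        · rw [hbval, if_pos hl]
          omega
        · have h1 := hblo l (by omega)
          have h2 := hlo l.castSucc (by simpa using (by omega : w ≤ (l : ℕ)))
          omega
      rw [hd]
      exact MvPolynomial.isHomogeneous_one _ _
    · intro l
      by_cases hl : w ≤ (l : ℕ)
      · have hd : (β l.succ - b l).toNat = 0 := by
          have h1 := hblo l hl
          have h2 := hlo l.succ (by simp only [Fin.val_succ]; omega)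
          omega
        rw [show E l = if w ≤ (l : ℕ) then (-1 : P k) else 0 from rfl, if_pos hl, hd]
        exact (MvPolynomial.isHomogeneous_one _ _).neg
      · rw [show E l = if w ≤ (l : ℕ) then (-1 : P k) else 0 from rfl, if_neg hl]
        exact MvPolynomial.isHomogeneous_zero _ _ _
    · intro l
      left
      by_cases hl : (l : ℕ) < w
      · rw [hbval, if_pos hl]
      · have h1 := hblo l (by omega)
        have h2 := hlo l.castSucc (by simpa using (by omega : w ≤ (l : ℕ)))
        omega
    · intro l
      by_cases hl : w ≤ (l : ℕ)
      · left
        have h1 := hblo l hl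
        have h2 := hlo l.succ (by simp only [Fin.val_succ]; omega)
        omega
      · right
        rw [show E l = if w ≤ (l : ℕ) then (-1 : P k) else 0 from rfl, if_neg hl]
  · -- LocSplitInj
    intro pt _
    apply bidiag_li_y
    intro l
    rw [show D l = (1 : P k) from rfl]
    simp
  · -- f ⬝ N = 0
    intro l
    rw [hNdef, bidiag_colSum]
    rw [show D l = (1 : P k) from rfl, show E l = if w ≤ (l : ℕ) then (-1 : P k) else 0 from rfl]
    by_cases hl : w ≤ (l : ℕ)
    · rw [if_pos hl,
        show f l.castSucc = if w ≤ ((l.castSucc : Fin (K+1)) : ℕ) then (1 : P k) else 0 from rfl,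
        show f l.succ = if w ≤ ((l.succ : Fin (K+1)) : ℕ) then (1 : P k) else 0 from rfl,
        if_pos (by simp only [Fin.coe_castSucc]; omega),
        if_pos (by simp only [Fin.val_succ]; omega)]
      ring
    · rw [if_neg hl,
        show f l.castSucc = if w ≤ ((l.castSucc : Fin (K+1)) : ℕ) then (1 : P k) else 0 from rfl,
        if_neg (by simp only [Fin.coe_castSucc]; omega)]
      ring
  · -- lift
    intro C' hC' φ hφ
    set g : Fin (K + 1) → P k := fun i =>
      if h : (i : ℕ) < w then φ ⟨(i : ℕ), lt_of_lt_of_le h hwK⟩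
      else ∑ l ∈ Finset.univ.filter (fun l : Fin K => (i : ℕ) ≤ (l : ℕ)), φ l with hgdef
    have hgval : ∀ i, g i = if h : (i : ℕ) < w then φ ⟨(i : ℕ), lt_of_lt_of_le h hwK⟩
      else ∑ l ∈ Finset.univ.filter (fun l : Fin K => (i : ℕ) ≤ (l : ℕ)), φ l := fun i => rfl
    refine ⟨g, ?_, ?_⟩
    · intro i
      rw [hgval]
      by_cases hi : (i : ℕ) < w
      · rw [dif_pos hi]
        have hbeq : b ⟨(i : ℕ), lt_of_lt_of_le hi hwK⟩ = β i := by
          rw [hbval, if_pos (by simpa using hi)]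
          exact congrArg β (Fin.ext (by simp))
        have := hφ ⟨(i : ℕ), lt_of_lt_of_le hi hwK⟩
        rw [hbeq] at this
        exact this
      · rw [dif_neg hi]
        have hdeg : ∀ l : Fin K, l ∈ Finset.univ.filter (fun l : Fin K => (i : ℕ) ≤ (l : ℕ)) →
            (φ l).IsHomogeneous (C' - β i).toNat := by
          intro l hl
          have hmem := (Finset.mem_filter.mp hl).2
          have h1 := hblo l (by omega)
          have h2 := hlo i (by omega)
          have := (hφ l).1
          rw [h1] at this
          rw [h2]
          exact this
        refine ⟨MvPolynomial.IsHomogeneous.sum _ _ _ hdeg, fun hc => ?_⟩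
        have h2 := hlo i (by omega)
        omega
    · intro l
      rw [hNdef, bidiag_colSum, hgval, hgval]
      rw [show D l = (1 : P k) from rfl, show E l = if w ≤ (l : ℕ) then (-1 : P k) else 0 from rfl]
      by_cases hl : (l : ℕ) < w
      · rw [dif_pos (by simpa using hl), if_neg (by omega), mul_zero, add_zero, mul_one]
        exact congrArg φ (Fin.ext (by simp))
      · rw [dif_neg (by simpa using hl), dif_neg (by simp only [Fin.val_succ]; omega),
          if_pos (by omega), mul_one, mul_neg_one]
        have hset : Finset.univ.filter (fun x : Fin K => ((l.castSucc : Fin (K+1)) : ℕ) ≤ (x : ℕ))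
            = insert l (Finset.univ.filter (fun x : Fin K => ((l.succ : Fin (K+1)) : ℕ) ≤ (x : ℕ))) := by
          ext x
          simp only [Finset.mem_filter, Finset.mem_insert, Finset.mem_univ, true_and,
            Fin.val_succ, Fin.coe_castSucc, Fin.ext_iff]
          omega
        rw [hset, Finset.sum_insert (by
          simp only [Finset.mem_filter, Finset.mem_univ, true_and, Fin.val_succ]
          omega)]
        ring


/-- Combined staircase lemma. -/
lemma stair {K : ℕ} (hK : 0 < K) (β : Fin (K + 1) → ℤ) (hanti : Antitone β)
    (hbal : ∀ i j, β i ≤ β j + 1) (C : ℤ) (hCr : β (Fin.last K) ≤ C) :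
    ∃ (b : Fin K → ℤ) (f : Fin (K + 1) → P k) (N : Fin (K + 1) → Fin K → P k),
      Antitone b ∧ (∀ i j, b i ≤ b j + 1) ∧
      (b ⟨K - 1, by omega⟩ ≤ C
        ∨ (b ⟨0, hK⟩ = β 0
            ∧ (Finset.univ.filter (fun i : Fin (K + 1) => β i < β 0)).card = 1)) ∧
      ((∀ l, b l ≤ C)
        ∨ (b ⟨0, hK⟩ = β 0
            ∧ (Finset.univ.filter (fun l : Fin K => b l < β 0)).card + 1
              = (Finset.univ.filter (fun i : Fin (K + 1) => β i < β 0)).card)) ∧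
      (∀ i, (f i).IsHomogeneous (C - β i).toNat ∧ (C - β i < 0 → f i = 0)) ∧
      (∀ pt : Fin 2 → k, pt ≠ 0 → ∃ i, MvPolynomial.eval pt (f i) ≠ 0) ∧
      IsHomMat β b N ∧ IsLocSplitInj N ∧
      (∀ l, (∑ i, f i * N i l) = 0) ∧
      (∀ C' : ℤ, C ≤ C' → ∀ φ : Fin K → P k,
        (∀ l, (φ l).IsHomogeneous (C' - b l).toNat ∧ (C' - b l < 0 → φ l = 0)) →
        ∃ g : Fin (K + 1) → P k,
          (∀ i, (g i).IsHomogeneous (C' - β i).toNat ∧ (C' - β i < 0 → g i = 0)) ∧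
          (∀ l, (∑ i, g i * N i l) = φ l)) := by
  by_cases hca : β 0 ≤ C
  · obtain ⟨b, f, N, h1, h2, h3, h4, h5, h6, h7, h8, h9⟩ := stairA (k := k) hK β hanti hbal C hca
    exact ⟨b, f, N, h1, h2, Or.inl (h3 _), Or.inl h3, h4, h5, h6, h7, h8, h9⟩
  · push_neg at hca
    obtain ⟨b, f, N, h1, h2, hb0, h3, hcnt, h4, h5, h6, h7, h8, h9⟩ :=
      stairB (k := k) hK β hanti hbal C hca hCr
    refine ⟨b, f, N, h1, h2, ?_, Or.inr ⟨hb0, hcnt⟩, h4, h5, h6, h7, h8, h9⟩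
    rcases h3 with h3 | h3
    · exact Or.inl h3
    · exact Or.inr ⟨hb0, h3⟩


lemma aux (n' : ℕ) (mL : ℕ) :
    ∀ (β : Fin ((n' + mL) + 1) → ℤ), Antitone β → (∀ i j, β i ≤ β j + 1) →
    ∀ (cs : Fin mL → ℤ), Monotone cs →
    (∀ j, β (Fin.last (n' + mL)) ≤ cs j) →
    (∀ j, cs j < β 0 →
      (j : ℕ) < (Finset.univ.filter (fun i : Fin ((n' + mL) + 1) => β i < β 0)).card) →
    ∃ (M : Fin mL → Fin ((n' + mL) + 1) → P k)
      (N : Fin ((n' + mL) + 1) → Fin (n' + 1) → P k) (b : Fin (n' + 1) → ℤ),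
      IsHomMat cs β M ∧ IsBundleSurj M ∧ (∀ i j, b i ≤ b j + 1) ∧
      IsHomMat β b N ∧ IsLocSplitInj N ∧ (∀ j l, (∑ i, M j i * N i l) = 0) := by
  induction mL with
  | zero =>
    intro β hanti hbal cs _ _ _
    set N0 : Fin ((n' + 0) + 1) → Fin (n' + 1) → P k := fun i l => if i = l then 1 else 0
      with hN0def
    have hN0val : ∀ i l, N0 i l = if i = l then 1 else 0 := fun i l => rfl
    refine ⟨fun j => j.elim0, N0, β, ?_, ?_, hbal, ?_, ?_, ?_⟩
    · intro j
      exact j.elim0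
    · intro pt hpt
      exact linearIndependent_empty_type
    · intro i l
      rw [hN0val]
      by_cases h : i = l
      · subst h
        rw [if_pos rfl]
        constructor
        · have : (β i - β i).toNat = 0 := by omega
          rw [this]
          exact MvPolynomial.isHomogeneous_one _ _
        · intro hc
          omega
      · rw [if_neg h]
        exact ⟨MvPolynomial.isHomogeneous_zero _ _ _, fun _ => rfl⟩
    · intro pt hpt
      have hfun : (fun l : Fin (n' + 1) => fun i : Fin ((n' + 0) + 1) =>
          MvPolynomial.eval pt (N0 i l))
          = fun l => Pi.single l (1 : k) := by
        funext l i
        rw [hN0val, apply_ite (MvPolynomial.eval pt), map_one, map_zero, Pi.single_apply]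
      rw [hfun]
      have hb := (Pi.basisFun k (Fin (n' + 1))).linearIndependent
      have hbeq : ⇑(Pi.basisFun k (Fin (n' + 1))) = fun l => Pi.single l (1 : k) :=
        funext (fun l => Pi.basisFun_apply k (Fin (n' + 1)) l)
      rwa [hbeq] at hb
    · intro j
      exact j.elim0
  | succ mL ih =>
    intro β hanti hbal cs hmono hinv1 hinv2
    set C : ℤ := cs 0 with hCdef
    have hK : 0 < n' + (mL + 1) := by omega
    have hCr : β (Fin.last (n' + (mL + 1))) ≤ C := hinv1 0
    obtain ⟨b1, f, N1, hb1anti, hb1bal, hclause3, hclause4, hfhom, hfnz, hN1hom, hN1inj,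
      hfN1, hlift⟩ := stair (k := k) hK β hanti hbal C hCr
    set cs' : Fin mL → ℤ := fun j => cs j.succ with hcs'def
    have hmono' : Monotone cs' := fun a b' hab => hmono (by
      rw [Fin.le_def]
      simp only [Fin.val_succ]
      exact Nat.add_le_add_right hab 1)
    have hC'ge : ∀ j, C ≤ cs' j := fun j => hmono (Fin.zero_le _)
    have hb0eq : b1 ⟨0, hK⟩ = b1 (0 : Fin ((n' + mL) + 1)) := congrArg b1 (Fin.ext (by simp))
    have hlasteq : (⟨(n' + (mL + 1)) - 1, by omega⟩ : Fin (n' + (mL + 1))) = Fin.last (n' + mL) :=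
      Fin.ext (by simp)
    have hinv1' : ∀ j, b1 (Fin.last (n' + mL)) ≤ cs' j := by
      intro j
      rcases hclause3 with h3 | ⟨hb0, hcard1⟩
      · rw [← hlasteq]
        exact le_trans h3 (hC'ge j)
      · have hcs : β 0 ≤ cs j.succ := by
          by_contra hcc
          push_neg at hcc
          have := hinv2 j.succ hcc
          rw [hcard1] at this
          simp only [Fin.val_succ] at this
          omega
        calc b1 (Fin.last (n' + mL)) ≤ b1 ⟨0, hK⟩ := hb1anti (by
              rw [Fin.le_def]
              simp)
          _ = β 0 := hb0
          _ ≤ cs' j := hcs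
    have hinv2' : ∀ j, cs' j < b1 (0 : Fin ((n' + mL) + 1)) →
        (j : ℕ) < (Finset.univ.filter (fun i : Fin ((n' + mL) + 1) => b1 i < b1 (0 : Fin ((n' + mL) + 1)))).card := by
      intro j hj
      rcases hclause4 with h4 | ⟨hb0, hcnt⟩
      · have h1 : b1 (0 : Fin ((n' + mL) + 1)) ≤ C := by
          rw [← hb0eq]
          exact h4 _
        have := hC'ge j
        omega
      · have hβ0 : b1 (0 : Fin ((n' + mL) + 1)) = β 0 := by rw [← hb0eq, hb0]
        have hcs : cs j.succ < β 0 := by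
          rw [← hβ0]
          exact hj
        have h2 := hinv2 j.succ hcs
        rw [← hcnt] at h2
        simp only [Fin.val_succ] at h2
        have hfeq : (Finset.univ.filter (fun i : Fin ((n' + mL) + 1) => b1 i < b1 (0 : Fin ((n' + mL) + 1))))
            = (Finset.univ.filter (fun l : Fin (n' + (mL + 1)) => b1 l < β 0)) := by
          apply Finset.filter_congr
          intro i _
          rw [hβ0]
        rw [hfeq]
        omega
    obtain ⟨M', N', b, hM'hom, hM'surj, hbbal, hN'hom, hN'inj, hMN'⟩ :=
      ih b1 hb1anti hb1bal cs' hmono' hinv1' hinv2'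
    choose g hg1 hg2 using fun j : Fin mL =>
      hlift (cs' j) (hC'ge j) (M' j) (fun l => hM'hom j l)
    set M : Fin (mL + 1) → Fin ((n' + (mL + 1)) + 1) → P k :=
      fun j => Fin.cases f g j with hMdef
    have hM0 : ∀ i, M 0 i = f i := fun i => by simp [hMdef]
    have hMsucc : ∀ j' i, M (Fin.succ j') i = g j' i := fun j' i => by simp [hMdef]
    set N : Fin ((n' + (mL + 1)) + 1) → Fin (n' + 1) → P k :=
      fun i l => ∑ mid, N1 i mid * N' mid l with hNdef
    have hassoc : ∀ (G : Fin ((n' + (mL + 1)) + 1) → P k) (l : Fin (n' + 1)),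
        (∑ i, G i * N i l) = ∑ mid, (∑ i, G i * N1 i mid) * N' mid l := by
      intro G l
      calc (∑ i, G i * N i l)
          = ∑ i, ∑ mid, G i * (N1 i mid * N' mid l) := by
            refine Finset.sum_congr rfl (fun i _ => ?_)
            rw [show N i l = ∑ mid, N1 i mid * N' mid l from rfl, Finset.mul_sum]
        _ = ∑ mid, ∑ i, G i * (N1 i mid * N' mid l) := Finset.sum_comm
        _ = ∑ mid, (∑ i, G i * N1 i mid) * N' mid l := by
            refine Finset.sum_congr rfl (fun mid _ => ?_)
            rw [Finset.sum_mul]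
            exact Finset.sum_congr rfl (fun i _ => by ring)
    refine ⟨M, N, b, ?_, ?_, hbbal, ?_, ?_, ?_⟩
    · -- IsHomMat cs β M
      intro j i
      refine Fin.cases ?_ ?_ j
      · rw [hM0]
        exact hfhom i
      · intro j'
        rw [hMsucc]
        exact hg1 j' i
    · -- IsBundleSurj M
      intro pt hpt
      rw [Fintype.linearIndependent_iff]
      intro lam hsum
      have hcoord : ∀ i, (∑ j, lam j * MvPolynomial.eval pt (M j i)) = 0 := by
        intro i
        have := congrFun hsum i
        simpa [Finset.sum_apply, Pi.smul_apply, smul_eq_mul] using this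
      have hmid : ∀ mid, (∑ j', lam (Fin.succ j') * MvPolynomial.eval pt (M' j' mid)) = 0 := by
        intro mid
        have h1 : (∑ i, (∑ j, lam j * MvPolynomial.eval pt (M j i))
            * MvPolynomial.eval pt (N1 i mid)) = 0 := by
          rw [Finset.sum_congr rfl (fun i (_ : i ∈ Finset.univ) => by rw [hcoord i, zero_mul])]
          simp
        have h2 : (∑ j, lam j * MvPolynomial.eval pt (∑ i, M j i * N1 i mid)) = 0 := by
          calc (∑ j, lam j * MvPolynomial.eval pt (∑ i, M j i * N1 i mid))
              = ∑ j, lam j * (∑ i, MvPolynomial.eval pt (M j i)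
                  * MvPolynomial.eval pt (N1 i mid)) := by
                refine Finset.sum_congr rfl (fun j _ => ?_)
                rw [map_sum]
                congr 1
                exact Finset.sum_congr rfl (fun i _ => by rw [map_mul])
            _ = ∑ j, ∑ i, lam j * (MvPolynomial.eval pt (M j i)
                  * MvPolynomial.eval pt (N1 i mid)) := by
                exact Finset.sum_congr rfl (fun j _ => Finset.mul_sum _ _ _)
            _ = ∑ i, ∑ j, lam j * (MvPolynomial.eval pt (M j i)
                  * MvPolynomial.eval pt (N1 i mid)) := Finset.sum_comm
            _ = ∑ i, (∑ j, lam j * MvPolynomial.eval pt (M j i))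
                  * MvPolynomial.eval pt (N1 i mid) := by
                refine Finset.sum_congr rfl (fun i _ => ?_)
                rw [Finset.sum_mul]
                exact Finset.sum_congr rfl (fun j _ => by ring)
            _ = 0 := h1
        rw [Fin.sum_univ_succ] at h2
        have hrow0 : MvPolynomial.eval pt (∑ i, M 0 i * N1 i mid) = 0 := by
          rw [Finset.sum_congr rfl (fun i (_ : i ∈ Finset.univ) => by rw [hM0 i]), hfN1 mid,
            map_zero]
        have hrows : ∀ j', MvPolynomial.eval pt (∑ i, M (Fin.succ j') i * N1 i mid)
            = MvPolynomial.eval pt (M' j' mid) := by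
          intro j'
          rw [Finset.sum_congr rfl (fun i (_ : i ∈ Finset.univ) => by rw [hMsucc j' i]),
            hg2 j' mid]
        rw [hrow0, mul_zero, zero_add] at h2
        rw [← h2]
        exact Finset.sum_congr rfl (fun j' _ => by rw [hrows j'])
      have hz : ∀ j', lam (Fin.succ j') = 0 := by
        have hli := hM'surj pt hpt
        rw [Fintype.linearIndependent_iff] at hli
        intro j'
        apply hli (fun j'' => lam (Fin.succ j''))
        funext mid
        have := hmid mid
        simpa [Finset.sum_apply, Pi.smul_apply, smul_eq_mul] using this
      have h0 : lam 0 = 0 := by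
        obtain ⟨i0, hi0⟩ := hfnz pt hpt
        have hc := hcoord i0
        rw [Fin.sum_univ_succ] at hc
        have hrest : (∑ j', lam (Fin.succ j') * MvPolynomial.eval pt (M (Fin.succ j') i0)) = 0 :=
          Finset.sum_eq_zero (fun j' _ => by rw [hz j', zero_mul])
        rw [hrest, add_zero, hM0] at hc
        exact (mul_eq_zero.mp hc).resolve_right hi0
      intro j
      exact Fin.cases h0 hz j
    · -- IsHomMat β b N
      exact homMat_mul hN1hom hN'hom
    · -- IsLocSplitInj N
      intro pt hpt
      rw [Fintype.linearIndependent_iff]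
      intro lam hsum
      have hco : ∀ i, (∑ l, lam l * MvPolynomial.eval pt (N i l)) = 0 := by
        intro i
        have := congrFun hsum i
        simpa [Finset.sum_apply, Pi.smul_apply, smul_eq_mul] using this
      set wv : Fin ((n' + mL) + 1) → k :=
        fun mid => ∑ l, lam l * MvPolynomial.eval pt (N' mid l) with hwvdef
      have hNexp : ∀ i, (∑ mid, wv mid * MvPolynomial.eval pt (N1 i mid)) = 0 := by
        intro i
        calc (∑ mid, wv mid * MvPolynomial.eval pt (N1 i mid))
            = ∑ mid, ∑ l, lam l * (MvPolynomial.eval pt (N1 i mid)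
                * MvPolynomial.eval pt (N' mid l)) := by
              refine Finset.sum_congr rfl (fun mid _ => ?_)
              rw [show wv mid = ∑ l, lam l * MvPolynomial.eval pt (N' mid l) from rfl,
                Finset.sum_mul]
              exact Finset.sum_congr rfl (fun l _ => by ring)
          _ = ∑ l, ∑ mid, lam l * (MvPolynomial.eval pt (N1 i mid)
                * MvPolynomial.eval pt (N' mid l)) := Finset.sum_comm
          _ = ∑ l, lam l * MvPolynomial.eval pt (N i l) := by
              refine Finset.sum_congr rfl (fun l _ => ?_)
              rw [show N i l = ∑ mid, N1 i mid * N' mid l from rfl, map_sum, Finset.mul_sum]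
              exact Finset.sum_congr rfl (fun mid _ => by rw [map_mul])
          _ = 0 := hco i
      have hw0 : ∀ mid, wv mid = 0 := by
        have hli := hN1inj pt hpt
        rw [Fintype.linearIndependent_iff] at hli
        intro mid
        apply hli wv
        funext i
        have := hNexp i
        simp only [Finset.sum_apply, Pi.smul_apply, smul_eq_mul, Pi.zero_apply]
        exact this
      have hli' := hN'inj pt hpt
      rw [Fintype.linearIndependent_iff] at hli'
      intro l
      apply hli' lam
      funext mid
      have := hw0 mid
      simpa [Finset.sum_apply, Pi.smul_apply, smul_eq_mul, hwvdef] using this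
    · -- M ⬝ N = 0
      intro j l
      rw [hassoc]
      refine Fin.cases ?_ ?_ j
      · rw [Finset.sum_congr rfl (fun mid (_ : mid ∈ Finset.univ) => by
          rw [Finset.sum_congr rfl (fun i (_ : i ∈ Finset.univ) => by rw [hM0 i]), hfN1 mid,
            zero_mul])]
        simp
      · intro j'
        rw [Finset.sum_congr rfl (fun mid (_ : mid ∈ Finset.univ) => by
          rw [Finset.sum_congr rfl (fun i (_ : i ∈ Finset.univ) => by rw [hMsucc j' i]),
            hg2 j' mid])]
        exact hMN' j' l


/-- a surjection forces each row to have some admissible column. -/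
lemma rows_have_cols {r m : ℕ} (a : Fin r → ℤ) (c : Fin m → ℤ)
    (M0 : Fin m → Fin r → P k) (hhom : IsHomMat c a M0) (hsurj : IsBundleSurj M0) :
    ∀ j, ∃ i, a i ≤ c j := by
  intro j
  have hpt : (![1, 0] : Fin 2 → k) ≠ 0 := by
    intro hcc
    have := congrFun hcc 0
    simp at this
  have hli := hsurj ![1, 0] hpt
  have hne := hli.ne_zero j
  rw [Function.ne_iff] at hne
  obtain ⟨i, hi⟩ := hne
  refine ⟨i, ?_⟩
  by_contra hcc
  push_neg at hcc
  rw [(hhom j i).2 (by omega)] at hi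
  simp at hi

/-- counting: rows with small degree are at most columns with small degree. -/
lemma count_le {r m : ℕ} (a : Fin r → ℤ) (c : Fin m → ℤ)
    (M0 : Fin m → Fin r → P k) (hhom : IsHomMat c a M0) (hsurj : IsBundleSurj M0) (Max : ℤ) :
    (Finset.univ.filter (fun j : Fin m => c j < Max)).card
      ≤ (Finset.univ.filter (fun i : Fin r => a i < Max)).card := by
  have hpt : (![1, 0] : Fin 2 → k) ≠ 0 := by
    intro hcc
    have := congrFun hcc 0
    simp at this
  have hli := hsurj ![1, 0] hpt
  set v : {j : Fin m // c j < Max} → (Fin r → k) :=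
    fun j => fun i => MvPolynomial.eval ![1, 0] (M0 j.1 i) with hvdef
  have hv : LinearIndependent k v := hli.comp Subtype.val Subtype.val_injective
  have hvanish : ∀ (j : {j : Fin m // c j < Max}) (i : Fin r), ¬ a i < Max → v j i = 0 := by
    intro j i hi
    rw [hvdef]
    have : M0 j.1 i = 0 := (hhom j.1 i).2 (by
      have := j.2
      omega)
    simp [this]
  set R : (Fin r → k) →ₗ[k] ({i : Fin r // a i < Max} → k) :=
    LinearMap.funLeft k k (Subtype.val : {i : Fin r // a i < Max} → Fin r) with hRdef
  have hspan : ∀ x ∈ Submodule.span k (Set.range v), ∀ i : Fin r, ¬ a i < Max → x i = 0 := by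
    intro x hx
    induction hx using Submodule.span_induction with
    | mem y hy =>
      obtain ⟨j, rfl⟩ := hy
      exact hvanish j
    | zero => intro i _; rfl
    | add y z _ _ hy hz =>
      intro i hi
      have h1 := hy i hi
      have h2 := hz i hi
      simp only [Pi.add_apply, h1, h2, add_zero]
    | smul t y _ hy =>
      intro i hi
      have h1 := hy i hi
      simp only [Pi.smul_apply, h1, smul_zero]
  have hdisj : Disjoint (Submodule.span k (Set.range v)) (LinearMap.ker R) := by
    rw [Submodule.disjoint_def]
    intro x hx hker
    have hprop := hspan x hx
    rw [LinearMap.mem_ker] at hker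
    funext i
    by_cases hi : a i < Max
    · have := congrFun hker ⟨i, hi⟩
      simpa [hRdef, LinearMap.funLeft_apply] using this
    · exact hprop i hi
  have hli2 : LinearIndependent k (⇑R ∘ v) := hv.map hdisj
  have hcard := hli2.fintype_card_le_finrank
  rw [Module.finrank_fintype_fun_eq_card] at hcard
  rw [← Fintype.card_subtype, ← Fintype.card_subtype]
  exact hcard

end BKaux

open BKaux in
theorem general_surjection_has_balanced_kernel
    {k : Type} [Field k] [IsAlgClosed k]
    (r m : ℕ) (hm : m ≤ r)
    (a : Fin r → ℤ) (c : Fin m → ℤ)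
    (hbal : ∀ i j, a i ≤ a j + 1)
    (hexists : ∃ M : Fin m → Fin r → MvPolynomial (Fin 2) k,
        IsHomMat c a M ∧ IsBundleSurj M) :
    ∃ M : Fin m → Fin r → MvPolynomial (Fin 2) k,
      IsHomMat c a M ∧ IsBundleSurj M ∧
      ∃ b : Fin (r - m) → ℤ, (∀ i j, b i ≤ b j + 1) ∧
        ∃ N : Fin r → Fin (r - m) → MvPolynomial (Fin 2) k,
          IsHomMat a b N ∧ IsLocSplitInj N ∧
          ∀ jm jb, (∑ i, M jm i * N i jb) = 0 := by
  obtain ⟨M0, hM0hom, hM0surj⟩ := hexists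
  rcases eq_or_lt_of_le hm with heq | hlt
  · -- square case : reuse the given surjection, trivial kernel
    haveI : IsEmpty (Fin (r - m)) := by
      rw [show r - m = 0 by omega]
      infer_instance
    exact ⟨M0, hM0hom, hM0surj, fun _ => 0, fun i j => (IsEmpty.false i).elim,
      fun _ _ => 0, fun i j => (IsEmpty.false j).elim,
      fun pt hpt => linearIndependent_empty_type, fun jm jb => (IsEmpty.false jb).elim⟩
  · set σ : Equiv.Perm (Fin r) := Tuple.sort (fun i => - a i) with hσdef
    set τ : Equiv.Perm (Fin m) := Tuple.sort c with hτdef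
    have hσanti : Antitone (fun i => a (σ i)) := by
      intro i j hij
      show a (σ j) ≤ a (σ i)
      have hthis := Tuple.monotone_sort (fun i => - a i) hij
      simp only [Function.comp_apply] at hthis
      simp only [hσdef]
      omega
    have hτmono : Monotone (fun j => c (τ j)) := fun i j hij => Tuple.monotone_sort c hij
    set n' : ℕ := r - m - 1 with hn'def
    have hr : (n' + m) + 1 = r := by omega
    set eρ : Fin ((n' + m) + 1) ≃ Fin r := finCongr hr with heρdef
    set β : Fin ((n' + m) + 1) → ℤ := fun i => a (σ (eρ i)) with hβdef
    set cs : Fin m → ℤ := fun j => c (τ j) with hcsdef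
    have heρval : ∀ i : Fin ((n' + m) + 1), ((eρ i : Fin r) : ℕ) = (i : ℕ) := fun i => by
      simp [heρdef]
    have hβanti : Antitone β := by
      intro i j hij
      exact hσanti (show eρ i ≤ eρ j by
        rw [Fin.le_def, heρval, heρval]
        exact hij)
    have hβbal : ∀ i j, β i ≤ β j + 1 := fun i j => hbal _ _
    have hsurjfun : ∀ i : Fin r, ∃ i', σ (eρ i') = i := fun i => ⟨eρ.symm (σ.symm i), by simp⟩
    have hβmin : ∀ i : Fin r, β (Fin.last (n' + m)) ≤ a i := by
      intro i
      obtain ⟨i', hi'⟩ := hsurjfun i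
      rw [← hi']
      exact hβanti (Fin.le_last i')
    have hinv1 : ∀ j, β (Fin.last (n' + m)) ≤ cs j := by
      intro j
      obtain ⟨i, hi⟩ := rows_have_cols a c M0 hM0hom hM0surj (τ j)
      exact le_trans (hβmin i) hi
    have hinv2 : ∀ j : Fin m, cs j < β 0 →
        (j : ℕ) < (Finset.univ.filter (fun i : Fin ((n' + m) + 1) => β i < β 0)).card := by
      intro j hj
      have hc1 : ((Finset.univ.filter (fun j' : Fin m => (j' : ℕ) < (j : ℕ) + 1)).card)
          = (j : ℕ) + 1 := card_filter_lt m ((j : ℕ) + 1) (by omega)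
      have hsub : (Finset.univ.filter (fun j' : Fin m => (j' : ℕ) < (j : ℕ) + 1))
          ⊆ (Finset.univ.filter (fun j' : Fin m => cs j' < β 0)) := by
        intro j' hj'
        rw [Finset.mem_filter] at hj' ⊢
        refine ⟨Finset.mem_univ _, ?_⟩
        have h1 : cs j' ≤ cs j := hτmono (by
          rw [Fin.le_def]
          have := hj'.2
          omega)
        omega
      have h2 : (j : ℕ) + 1 ≤ (Finset.univ.filter (fun j' : Fin m => cs j' < β 0)).card := by
        rw [← hc1]
        exact Finset.card_le_card hsub
      have h3 : (Finset.univ.filter (fun j' : Fin m => cs j' < β 0)).card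
          = (Finset.univ.filter (fun j'' : Fin m => c j'' < β 0)).card := by
        apply Finset.card_bij' (fun j' _ => τ j') (fun j'' _ => τ.symm j'')
        · intro j' hj'
          rw [Finset.mem_filter] at hj' ⊢
          exact ⟨Finset.mem_univ _, hj'.2⟩
        · intro j'' hj''
          rw [Finset.mem_filter] at hj'' ⊢
          refine ⟨Finset.mem_univ _, ?_⟩
          show c (τ (τ.symm j'')) < β 0
          rw [Equiv.apply_symm_apply]
          exact hj''.2
        · intro j' _
          simp
        · intro j'' _
          simp
      have h4 := count_le a c M0 hM0hom hM0surj (β 0)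
      have h5 : (Finset.univ.filter (fun i : Fin r => a i < β 0)).card
          = (Finset.univ.filter (fun i' : Fin ((n' + m) + 1) => β i' < β 0)).card := by
        apply Finset.card_bij' (fun i _ => eρ.symm (σ.symm i)) (fun i' _ => σ (eρ i'))
        · intro i hi
          rw [Finset.mem_filter] at hi ⊢
          refine ⟨Finset.mem_univ _, ?_⟩
          show a (σ (eρ (eρ.symm (σ.symm i)))) < β 0
          simp only [Equiv.apply_symm_apply]
          exact hi.2
        · intro i' hi'
          rw [Finset.mem_filter] at hi' ⊢
          exact ⟨Finset.mem_univ _, hi'.2⟩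
        · intro i _
          simp
        · intro i' _
          simp
      omega
    obtain ⟨Ma, Na, ba, hMahom, hMasurj, hbabal, hNahom, hNainj, hMaNa⟩ :=
      aux (k := k) n' m β hβanti hβbal cs hτmono hinv1 hinv2
    have hrm : n' + 1 = r - m := by omega
    set ek : Fin (n' + 1) ≃ Fin (r - m) := finCongr hrm with hekdef
    set eqv : Fin r ≃ Fin ((n' + m) + 1) := σ.symm.trans eρ.symm with heqvdef
    set M : Fin m → Fin r → MvPolynomial (Fin 2) k :=
      fun j i => Ma (τ.symm j) (eρ.symm (σ.symm i)) with hMdef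
    set N : Fin r → Fin (r - m) → MvPolynomial (Fin 2) k :=
      fun i l => Na (eρ.symm (σ.symm i)) (ek.symm l) with hNdef
    set b : Fin (r - m) → ℤ := fun l => ba (ek.symm l) with hbdef
    refine ⟨M, ?_, ?_, b, fun i j => hbabal _ _, N, ?_, ?_, ?_⟩
    · intro j i
      have heq1 : cs (τ.symm j) = c j := by
        show c (τ (τ.symm j)) = c j
        rw [Equiv.apply_symm_apply]
      have heq2 : β (eρ.symm (σ.symm i)) = a i := by
        show a (σ (eρ (eρ.symm (σ.symm i)))) = a i
        simp only [Equiv.apply_symm_apply]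
      have h := hMahom (τ.symm j) (eρ.symm (σ.symm i))
      rw [heq1, heq2] at h
      exact h
    · intro pt hpt
      have hli := hMasurj pt hpt
      have step1 : LinearIndependent k (fun j : Fin m => fun i' : Fin ((n' + m) + 1) =>
          MvPolynomial.eval pt (Ma (τ.symm j) i')) :=
        hli.comp (fun j => τ.symm j) (Equiv.injective _)
      have step2 := step1.map' (LinearEquiv.funCongrLeft k k eqv).toLinearMap
        (LinearEquiv.ker _)
      have hfam : (⇑(LinearEquiv.funCongrLeft k k eqv).toLinearMap ∘
          (fun j : Fin m => fun i' : Fin ((n' + m) + 1) =>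
            MvPolynomial.eval pt (Ma (τ.symm j) i')))
          = fun j : Fin m => fun i : Fin r => MvPolynomial.eval pt (M j i) := by
        funext j i
        simp only [Function.comp_apply, LinearEquiv.coe_coe, LinearEquiv.funCongrLeft_apply,
          LinearMap.funLeft_apply]
        rfl
      rwa [hfam] at step2
    · intro i l
      have heq2 : β (eρ.symm (σ.symm i)) = a i := by
        show a (σ (eρ (eρ.symm (σ.symm i)))) = a i
        simp only [Equiv.apply_symm_apply]
      have h := hNahom (eρ.symm (σ.symm i)) (ek.symm l)
      rw [heq2] at h
      exact h
    · intro pt hpt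
      have hli := hNainj pt hpt
      have step1 : LinearIndependent k (fun l : Fin (r - m) => fun i' : Fin ((n' + m) + 1) =>
          MvPolynomial.eval pt (Na i' (ek.symm l))) :=
        hli.comp (fun l => ek.symm l) (Equiv.injective _)
      have step2 := step1.map' (LinearEquiv.funCongrLeft k k eqv).toLinearMap
        (LinearEquiv.ker _)
      have hfam : (⇑(LinearEquiv.funCongrLeft k k eqv).toLinearMap ∘
          (fun l : Fin (r - m) => fun i' : Fin ((n' + m) + 1) =>
            MvPolynomial.eval pt (Na i' (ek.symm l))))
          = fun l : Fin (r - m) => fun i : Fin r => MvPolynomial.eval pt (N i l) := by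
        funext l i
        simp only [Function.comp_apply, LinearEquiv.coe_coe, LinearEquiv.funCongrLeft_apply,
          LinearMap.funLeft_apply]
        rfl
      rwa [hfam] at step2
    · intro jm jb
      have h := hMaNa (τ.symm jm) (ek.symm jb)
      rw [← h]
      exact Fintype.sum_equiv eqv _ _ (fun i => rfl)
end

section
/- Let P be a smooth variety, and let X_1, X_2 ⊂ P be smooth codimension-c subvarieties such that Y = X_1 ∩ X_2 is a smooth divisor in each of X_1 and X_2, meeting transversely in the appropriate sense (locally X has equations u_1,...,u_{c-1}, u_c^1 u_c^2 where u_1,...,u_{c-1},u_c^1 cut out X_1 and u_c^2 cuts out Y on X_1). Then X = X_1 ∪ X_2 is a local complete intersection in P and there are exact sequences 0 → Ň_{X/P} ⊗ O_{X_1} → Ň_{X_1/P} → Ň_{Y/X_2} → 0 and 0 → N_{X_1/P} → N_{X/P} ⊗ O_{X_1} → N_{Y/X_1} ⊗ N_{Y/X_2} → 0. -/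
/-!
STATEMENT 16. Local commutative-algebra formulation.  `P = Spec R` smooth,
`X₁` cut out by `u₁,...,u_{c-1}, a` (ideal `I₁`), `X₂` by `u₁,...,u_{c-1}, b`,
`Y = X₁ ∩ X₂` (ideal `IY = (u, a, b)`), and `X = X₁ ∪ X₂` cut out by
`u₁,...,u_{c-1}, a·b` (ideal `I`); transversality/smoothness is expressed by
`(u₁,...,u_{c-1}, a, b)` being a regular sequence.  Then `X` is lci and there
are exact sequences of conormal modules
`0 → Ň_{X/P} ⊗ O_{X₁} → Ň_{X₁/P} → Ň_{Y/X₂} → 0`, i.e.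
`0 → I/(I₁·I) → I₁/I₁² → R/IY → 0`
(where `I₁.Cotangent = I₁/I₁²`, the map `g` sends the class of `a` to `1` and
the classes of the `uᵢ` to `0`, so its target `R/IY` is `Ň_{Y/X₂}`, free of
rank 1 on `O_Y` generated by the class of `a`), and its `Ext`-dual sequence of
normal modules `0 → N_{X₁/P} → N_{X/P} ⊗ O_{X₁} → N_{Y/X₁} ⊗ N_{Y/X₂} → 0`,
expressed by applying `Hom_R(-, O_{X₁}) = Hom_R(-, R/I₁)` (precomposition with
`f`) and noting `N_{Y/X₁} ⊗ N_{Y/X₂} ≅ R/IY` as an `R`-module.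
-/

namespace TUC16

structure Setup (R : Type) [CommRing R] where
  K : Ideal R
  I1 : Ideal R
  I : Ideal R
  IY : Ideal R
  a : R
  b : R
  hA : ∀ s : R, s * a ∈ K → s ∈ K
  hB : ∀ s : R, s * b ∈ I1 → s ∈ I1
  hI1 : I1 = K ⊔ Ideal.span {a}
  hI : I = K ⊔ Ideal.span {a * b}
  hIY : IY = I1 ⊔ Ideal.span {b}

namespace Setup

variable {R : Type} [CommRing R] (S : Setup R)

theorem hKI1 : S.K ≤ S.I1 := S.hI1 ▸ le_sup_left

theorem haI1 : S.a ∈ S.I1 := S.hI1 ▸ Submodule.mem_sup_right (Ideal.subset_span rfl)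

theorem hKI : S.K ≤ S.I := S.hI ▸ le_sup_left

theorem habI : S.a * S.b ∈ S.I := S.hI ▸ Submodule.mem_sup_right (Ideal.subset_span rfl)

theorem hII1 : S.I ≤ S.I1 := by
  rw [S.hI]
  refine sup_le S.hKI1 ?_
  rw [Ideal.span_le, Set.singleton_subset_iff]
  exact Ideal.mul_mem_right _ _ S.haI1

theorem hI1IY : S.I1 ≤ S.IY := S.hIY ▸ le_sup_left

theorem hbIY : S.b ∈ S.IY := S.hIY ▸ Submodule.mem_sup_right (Ideal.subset_span rfl)

theorem mem1' {x : R} (hx : x ∈ S.I1) : ∃ s : R, x - s * S.a ∈ S.K := by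
  rw [S.hI1] at hx
  obtain ⟨k, hk, y, hy, rfl⟩ := Submodule.mem_sup.mp hx
  obtain ⟨s, rfl⟩ := Ideal.mem_span_singleton'.mp hy
  exact ⟨s, by simpa using hk⟩

theorem memI' {x : R} (hx : x ∈ S.I) : ∃ t : R, x - t * (S.a * S.b) ∈ S.K := by
  rw [S.hI] at hx
  obtain ⟨k, hk, y, hy, rfl⟩ := Submodule.mem_sup.mp hx
  obtain ⟨t, rfl⟩ := Ideal.mem_span_singleton'.mp hy
  exact ⟨t, by simpa using hk⟩

theorem memY' {y : R} (hy : y ∈ S.IY) : ∃ s : R, y - s * S.b ∈ S.I1 := by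
  rw [S.hIY] at hy
  obtain ⟨j, hj, z, hz, rfl⟩ := Submodule.mem_sup.mp hy
  obtain ⟨s, rfl⟩ := Ideal.mem_span_singleton'.mp hz
  exact ⟨s, by simpa using hj⟩

theorem sq1 {x : R} (hx : x ∈ S.I1 ^ 2) :
    ∃ κ σ, κ ∈ S.K * S.I1 ∧ σ ∈ S.I1 ∧ x = κ + σ * S.a := by
  have hx' : x ∈ S.K * S.I1 ⊔ Ideal.span {S.a} * S.I1 := by
    rw [← Submodule.sup_mul, ← S.hI1, ← pow_two]; exact hx
  obtain ⟨κ, hκ, y, hy, rfl⟩ := Submodule.mem_sup.mp hx'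
  rw [Ideal.mem_span_singleton_mul] at hy
  obtain ⟨σ, hσ, rfl⟩ := hy
  exact ⟨κ, σ, hκ, hσ, by ring⟩

theorem prodII1mem {x : R} (hx : x ∈ S.I1 * S.I) :
    ∃ κ σ, κ ∈ S.K * S.I1 ∧ σ ∈ S.I1 ∧ x = κ + σ * (S.a * S.b) := by
  have hx' : x ∈ S.K * S.I1 ⊔ Ideal.span {S.a * S.b} * S.I1 := by
    rw [← Submodule.sup_mul, ← S.hI, mul_comm]; exact hx
  obtain ⟨κ, hκ, y, hy, rfl⟩ := Submodule.mem_sup.mp hx'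
  rw [Ideal.mem_span_singleton_mul] at hy
  obtain ⟨σ, hσ, rfl⟩ := hy
  exact ⟨κ, σ, hκ, hσ, by ring⟩

theorem KI1_le_K : S.K * S.I1 ≤ S.K := Ideal.mul_le_inf.trans inf_le_left

theorem KI1_le_prod : S.K * S.I1 ≤ S.I1 * S.I :=
  (Ideal.mul_mono_left S.hKI).trans_eq (mul_comm _ _)

theorem smul_ab_mem_prod {σ : R} (hσ : σ ∈ S.I1) : σ * (S.a * S.b) ∈ S.I1 * S.I :=
  Ideal.mul_mem_mul hσ S.habI

theorem prod_le_sq : S.I1 * S.I ≤ S.I1 ^ 2 := by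
  rw [pow_two]; exact Ideal.mul_mono_right S.hII1

theorem uniqA {x s s' : R} (h : x - s * S.a ∈ S.K) (h' : x - s' * S.a ∈ S.K) :
    s - s' ∈ S.K := by
  refine S.hA _ ?_
  have : (s - s') * S.a = (x - s' * S.a) - (x - s * S.a) := by ring
  rw [this]
  exact S.K.sub_mem h' h

theorem uniqAB {x t t' : R} (h : x - t * (S.a * S.b) ∈ S.K)
    (h' : x - t' * (S.a * S.b) ∈ S.K) : t - t' ∈ S.I1 := by
  refine S.hB _ (S.hKI1 (S.hA _ ?_))
  have : (t - t') * S.b * S.a = (x - t' * (S.a * S.b)) - (x - t * (S.a * S.b)) := by ring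
  rw [this]
  exact S.K.sub_mem h' h

noncomputable def sCoef (x : ↥S.I1) : R := (S.mem1' x.2).choose

theorem sCoef_spec (x : ↥S.I1) : (x : R) - S.sCoef x * S.a ∈ S.K :=
  (S.mem1' x.2).choose_spec

theorem sCoef_unique {x : ↥S.I1} {s : R} (h : (x : R) - s * S.a ∈ S.K) :
    S.sCoef x - s ∈ S.K :=
  S.uniqA (S.sCoef_spec x) h

noncomputable def tCoef (x : ↥S.I) : R := (S.memI' x.2).choose

theorem tCoef_spec (x : ↥S.I) : (x : R) - S.tCoef x * (S.a * S.b) ∈ S.K :=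
  (S.memI' x.2).choose_spec

theorem tCoef_unique {x : ↥S.I} {t : R} (h : (x : R) - t * (S.a * S.b) ∈ S.K) :
    S.tCoef x - t ∈ S.I1 :=
  S.uniqAB (S.tCoef_spec x) h

/-- membership characterization for the quotient `I ⧸ I1 • ⊤`. -/
theorem mk_eq_zero_iff (x : ↥S.I) :
    (Submodule.Quotient.mk x : ↥S.I ⧸ (S.I1 • (⊤ : Submodule R ↥S.I))) = 0 ↔
      (x : R) ∈ S.I1 * S.I := by
  rw [Submodule.Quotient.mk_eq_zero, Submodule.mem_smul_top_iff, smul_eq_mul]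

theorem mk_eq_mk_iff (x y : ↥S.I) :
    (Submodule.Quotient.mk x : ↥S.I ⧸ (S.I1 • (⊤ : Submodule R ↥S.I))) =
      Submodule.Quotient.mk y ↔ (x : R) - (y : R) ∈ S.I1 * S.I := by
  rw [Submodule.Quotient.eq, Submodule.mem_smul_top_iff, smul_eq_mul]
  rfl

/-- the linear map `I1 → R ⧸ IY`, `k + s·a ↦ s`. -/
noncomputable def g0 : ↥S.I1 →ₗ[R] R ⧸ S.IY where
  toFun x := Submodule.Quotient.mk (S.sCoef x)
  map_add' x y := by
    rw [← Submodule.Quotient.mk_add, Submodule.Quotient.eq]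
    refine S.hI1IY (S.hKI1 (S.uniqA (S.sCoef_spec (x + y)) ?_))
    have h1 := S.K.add_mem (S.sCoef_spec x) (S.sCoef_spec y)
    have e : ((x : R) - S.sCoef x * S.a) + ((y : R) - S.sCoef y * S.a)
        = ((x + y : ↥S.I1) : R) - (S.sCoef x + S.sCoef y) * S.a := by
      push_cast; ring
    rwa [e] at h1
  map_smul' r x := by
    simp only [RingHom.id_apply]
    rw [← Submodule.Quotient.mk_smul, Submodule.Quotient.eq]
    refine S.hI1IY (S.hKI1 (S.uniqA (S.sCoef_spec (r • x)) ?_))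
    have h1 := S.K.smul_mem r (S.sCoef_spec x)
    have e : r • ((x : R) - S.sCoef x * S.a)
        = ((r • x : ↥S.I1) : R) - (r • S.sCoef x) * S.a := by
      push_cast [smul_eq_mul]; ring
    rwa [e] at h1

theorem g0_kills : S.I1 • (⊤ : Submodule R ↥S.I1) ≤ LinearMap.ker S.g0 := by
  intro x hx
  have hx2 : (x : R) ∈ S.I1 ^ 2 := by
    rw [pow_two]
    rw [Submodule.mem_smul_top_iff, smul_eq_mul] at hx
    exact hx
  obtain ⟨κ, σ, hκ, hσ, hdec⟩ := S.sq1 hx2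
  have hK : (x : R) - σ * S.a ∈ S.K := by rw [hdec]; simpa using S.KI1_le_K hκ
  have : S.sCoef x ∈ S.IY := by
    have h1 := S.sCoef_unique hK
    have : S.sCoef x = (S.sCoef x - σ) + σ := by ring
    rw [this]
    exact S.IY.add_mem (S.hI1IY (S.hKI1 h1)) (S.hI1IY hσ)
  rw [LinearMap.mem_ker]
  show (Submodule.Quotient.mk (S.sCoef x) : R ⧸ S.IY) = 0
  rwa [Submodule.Quotient.mk_eq_zero]

/-- `g : I1/I1² → R/IY`. -/
noncomputable def g : S.I1.Cotangent →ₗ[R] R ⧸ S.IY :=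
  Submodule.liftQ _ S.g0 S.g0_kills

theorem g_toCotangent (x : ↥S.I1) :
    S.g (S.I1.toCotangent x) = Submodule.Quotient.mk (S.sCoef x) := rfl

theorem g_eq_mk_of (x : ↥S.I1) {s : R} (h : (x : R) - s * S.a ∈ S.K) :
    S.g (S.I1.toCotangent x) = Submodule.Quotient.mk s := by
  rw [S.g_toCotangent, Submodule.Quotient.eq]
  exact S.hI1IY (S.hKI1 (S.sCoef_unique h))

/-- `f : I/(I1·I) → I1/I1²`. -/
noncomputable def f :
    (↥S.I ⧸ (S.I1 • (⊤ : Submodule R ↥S.I))) →ₗ[R] S.I1.Cotangent :=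
  Submodule.mapQ _ _ (Submodule.inclusion S.hII1) (by
    intro x hx
    rw [Submodule.mem_comap, Submodule.mem_smul_top_iff, smul_eq_mul]
    rw [Submodule.mem_smul_top_iff, smul_eq_mul] at hx
    show (x : R) ∈ S.I1 * S.I1
    exact (Ideal.mul_mono_right S.hII1) hx)

theorem f_apply (x : R) (hx : x ∈ S.I) (hx1 : x ∈ S.I1) :
    S.f (Submodule.Quotient.mk ⟨x, hx⟩) = S.I1.toCotangent ⟨x, hx1⟩ := rfl

theorem f_injective : Function.Injective S.f := by
  rw [← LinearMap.ker_eq_bot, eq_bot_iff]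
  intro z hz
  obtain ⟨x, rfl⟩ := Submodule.Quotient.mk_surjective _ z
  rw [LinearMap.mem_ker] at hz
  have hx2 : (x : R) ∈ S.I1 ^ 2 := by
    have : S.f (Submodule.Quotient.mk x) = S.I1.toCotangent ⟨(x : R), S.hII1 x.2⟩ := rfl
    rw [this, Ideal.toCotangent_eq_zero] at hz
    exact hz
  obtain ⟨κ, σ, hκ, hσ, hdec⟩ := S.sq1 hx2
  obtain ⟨t, ht⟩ := S.memI' x.2
  -- t * b - σ ∈ K
  have h1 : (t * S.b - σ) * S.a ∈ S.K := by
    have e : (t * S.b - σ) * S.a = ((x : R) - σ * S.a) - ((x : R) - t * (S.a * S.b)) := by ring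
    rw [e]
    refine S.K.sub_mem ?_ ht
    rw [hdec]; simpa using S.KI1_le_K hκ
  have h2 : t * S.b - σ ∈ S.K := S.hA _ h1
  have h3 : t ∈ S.I1 := by
    refine S.hB t ?_
    have : t * S.b = (t * S.b - σ) + σ := by ring
    rw [this]
    exact S.I1.add_mem (S.hKI1 h2) hσ
  -- now x ∈ I1 * I
  have h4 : (x : R) ∈ S.I1 * S.I := by
    have e : (x : R) = κ + S.a * (σ - t * S.b) + t * (S.a * S.b) := by rw [hdec]; ring
    rw [e]
    refine (S.I1 * S.I).add_mem ((S.I1 * S.I).add_mem (S.KI1_le_prod hκ) ?_) ?_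
    · refine Ideal.mul_mem_mul S.haI1 (S.hKI ?_)
      have := S.K.neg_mem h2
      simpa [neg_sub] using this
    · exact S.smul_ab_mem_prod h3
  simp only [Submodule.mem_bot]
  rw [← S.mk_eq_zero_iff] at h4
  exact h4

theorem fg_exact : Function.Exact S.f S.g := by
  rw [LinearMap.exact_iff]
  ext z
  obtain ⟨w, rfl⟩ := S.I1.toCotangent_surjective z
  constructor
  · intro hw
    rw [LinearMap.mem_ker, S.g_toCotangent, Submodule.Quotient.mk_eq_zero] at hw
    obtain ⟨s, hs⟩ := S.memY' hw
    have hzK : (w : R) - S.sCoef w * S.a ∈ S.K := S.sCoef_spec w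
    set x : R := ((w : R) - S.sCoef w * S.a) + s * (S.a * S.b) with hxdef
    have hxI : x ∈ S.I := S.I.add_mem (S.hKI hzK) (Ideal.mul_mem_left _ _ S.habI)
    refine ⟨Submodule.Quotient.mk ⟨x, hxI⟩, ?_⟩
    rw [S.f_apply x hxI (S.hII1 hxI), Ideal.toCotangent_eq]
    have e : x - (w : R) = (s * S.b - S.sCoef w) * S.a := by rw [hxdef]; ring
    rw [e, pow_two]
    refine Ideal.mul_mem_mul ?_ S.haI1
    have := S.I1.neg_mem hs
    simpa [neg_sub] using this
  · rintro ⟨v, hv⟩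
    obtain ⟨x, rfl⟩ := Submodule.Quotient.mk_surjective _ v
    rw [LinearMap.mem_ker, ← hv]
    have : S.f (Submodule.Quotient.mk x) = S.I1.toCotangent ⟨(x : R), S.hII1 x.2⟩ := rfl
    rw [this]
    obtain ⟨t, ht⟩ := S.memI' x.2
    have ht' : (x : R) - (t * S.b) * S.a ∈ S.K := by
      have e : (x : R) - (t * S.b) * S.a = (x : R) - t * (S.a * S.b) := by ring
      rw [e]; exact ht
    rw [S.g_eq_mk_of _ ht', Submodule.Quotient.mk_eq_zero]
    exact S.hIY ▸ Submodule.mem_sup_right (Ideal.mem_span_singleton'.mpr ⟨t, rfl⟩)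

theorem g_surjective : Function.Surjective S.g := by
  intro y
  obtain ⟨r, rfl⟩ := Submodule.Quotient.mk_surjective _ y
  refine ⟨S.I1.toCotangent ⟨r * S.a, Ideal.mul_mem_left _ _ S.haI1⟩, ?_⟩
  exact S.g_eq_mk_of _ (by simp)

/-! ### The dual sequence -/

theorem smul_quot_zero {σ : R} (hσ : σ ∈ S.I1) (z : R ⧸ S.I1) : σ • z = 0 := by
  obtain ⟨t, rfl⟩ := Submodule.Quotient.mk_surjective _ z
  rw [← Submodule.Quotient.mk_smul, Submodule.Quotient.mk_eq_zero, smul_eq_mul]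
  exact Ideal.mul_mem_right _ _ hσ

theorem Qb {z : R ⧸ S.I1} (hz : S.b • z = 0) : z = 0 := by
  obtain ⟨t, rfl⟩ := Submodule.Quotient.mk_surjective _ z
  rw [← Submodule.Quotient.mk_smul, Submodule.Quotient.mk_eq_zero, smul_eq_mul] at hz
  rw [Submodule.Quotient.mk_eq_zero]
  exact S.hB t (by rwa [mul_comm])

/-- class of `a·b` in `I ⧸ I1·I`. -/
def xi : ↥S.I ⧸ (S.I1 • (⊤ : Submodule R ↥S.I)) :=
  Submodule.Quotient.mk ⟨S.a * S.b, S.habI⟩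

/-- the projection `R/I1 → R/IY`. -/
def pibar : (R ⧸ S.I1) →ₗ[R] R ⧸ S.IY :=
  Submodule.mapQ _ _ LinearMap.id (fun x hx => S.hI1IY hx)

theorem pibar_mk (r : R) :
    S.pibar (Submodule.Quotient.mk r) = Submodule.Quotient.mk r := rfl

/-- `h : Hom(I/(I1·I), R/I1) → R/IY`, evaluation at the class of `a·b`. -/
def hmap : ((↥S.I ⧸ (S.I1 • (⊤ : Submodule R ↥S.I))) →ₗ[R] R ⧸ S.I1) →ₗ[R] R ⧸ S.IY :=
  S.pibar ∘ₗ LinearMap.applyₗ S.xi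

theorem hmap_apply (φ : (↥S.I ⧸ (S.I1 • (⊤ : Submodule R ↥S.I))) →ₗ[R] R ⧸ S.I1) :
    S.hmap φ = S.pibar (φ S.xi) := rfl

theorem lemL (φ : (↥S.I ⧸ (S.I1 • (⊤ : Submodule R ↥S.I))) →ₗ[R] R ⧸ S.I1)
    (c : R ⧸ S.I1) (hc : φ S.xi = S.b • c) {s : R} (hs : s * S.a ∈ S.I) :
    φ (Submodule.Quotient.mk ⟨s * S.a, hs⟩) = s • c := by
  rw [← sub_eq_zero]
  apply S.Qb
  rw [smul_sub]
  have e1 : S.b • (⟨s * S.a, hs⟩ : ↥S.I) = s • (⟨S.a * S.b, S.habI⟩ : ↥S.I) :=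
    Subtype.ext (by simp [smul_eq_mul]; ring)
  have e2 : S.b • φ (Submodule.Quotient.mk ⟨s * S.a, hs⟩) = s • (S.b • c) := by
    rw [← map_smul, ← Submodule.Quotient.mk_smul, e1, Submodule.Quotient.mk_smul,
      map_smul, ← hc]
    rfl
  rw [e2, smul_comm, sub_self]

theorem lemPhi (φ : (↥S.I ⧸ (S.I1 • (⊤ : Submodule R ↥S.I))) →ₗ[R] R ⧸ S.I1)
    (c : R ⧸ S.I1) (hc : φ S.xi = S.b • c) (w : ↥S.I1) {s : R}
    (hw : (w : R) - s * S.a ∈ S.K) :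
    φ (Submodule.Quotient.mk ⟨(w : R) - S.sCoef w * S.a, S.hKI (S.sCoef_spec w)⟩)
        + S.sCoef w • c
      = φ (Submodule.Quotient.mk ⟨(w : R) - s * S.a, S.hKI hw⟩) + s • c := by
  have hδ : S.sCoef w - s ∈ S.K := S.sCoef_unique hw
  have hδa : (S.sCoef w - s) * S.a ∈ S.I := S.hKI (S.K.mul_mem_right _ hδ)
  have e1 : (⟨(w : R) - S.sCoef w * S.a, S.hKI (S.sCoef_spec w)⟩ : ↥S.I)
      = ⟨(w : R) - s * S.a, S.hKI hw⟩ - ⟨(S.sCoef w - s) * S.a, hδa⟩ :=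
    Subtype.ext (by simp; ring)
  rw [e1, Submodule.Quotient.mk_sub]
  rw [map_sub, S.lemL φ c hc hδa]
  rw [sub_smul]
  abel

/-- for `φ` with `φ(ab) = b • c`, the map `I1/I1² → R/I1`, `k + s·a ↦ φ(k) + s·c`. -/
noncomputable def psi0 (φ : (↥S.I ⧸ (S.I1 • (⊤ : Submodule R ↥S.I))) →ₗ[R] R ⧸ S.I1)
    (c : R ⧸ S.I1) (hc : φ S.xi = S.b • c) : ↥S.I1 →ₗ[R] R ⧸ S.I1 where
  toFun w := φ (Submodule.Quotient.mk ⟨(w : R) - S.sCoef w * S.a, S.hKI (S.sCoef_spec w)⟩)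
      + S.sCoef w • c
  map_add' x y := by
    have hw : ((x + y : ↥S.I1) : R) - (S.sCoef x + S.sCoef y) * S.a ∈ S.K := by
      have h1 := S.K.add_mem (S.sCoef_spec x) (S.sCoef_spec y)
      have e : ((x : R) - S.sCoef x * S.a) + ((y : R) - S.sCoef y * S.a)
          = ((x + y : ↥S.I1) : R) - (S.sCoef x + S.sCoef y) * S.a := by push_cast; ring
      rwa [e] at h1
    rw [S.lemPhi φ c hc (x + y) hw]
    have e1 : (⟨((x + y : ↥S.I1) : R) - (S.sCoef x + S.sCoef y) * S.a, S.hKI hw⟩ : ↥S.I)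
        = ⟨(x : R) - S.sCoef x * S.a, S.hKI (S.sCoef_spec x)⟩
          + ⟨(y : R) - S.sCoef y * S.a, S.hKI (S.sCoef_spec y)⟩ :=
      Subtype.ext (by push_cast; ring)
    rw [e1, Submodule.Quotient.mk_add, map_add, add_smul]
    abel
  map_smul' r x := by
    simp only [RingHom.id_apply]
    have hw : ((r • x : ↥S.I1) : R) - (r * S.sCoef x) * S.a ∈ S.K := by
      have h1 := S.K.smul_mem r (S.sCoef_spec x)
      have e : r • ((x : R) - S.sCoef x * S.a)
          = ((r • x : ↥S.I1) : R) - (r * S.sCoef x) * S.a := by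
        push_cast [smul_eq_mul]; ring
      rwa [e] at h1
    rw [S.lemPhi φ c hc (r • x) hw]
    have e1 : (⟨((r • x : ↥S.I1) : R) - (r * S.sCoef x) * S.a, S.hKI hw⟩ : ↥S.I)
        = r • ⟨(x : R) - S.sCoef x * S.a, S.hKI (S.sCoef_spec x)⟩ :=
      Subtype.ext (by push_cast [smul_eq_mul]; ring)
    rw [e1, Submodule.Quotient.mk_smul, map_smul, mul_smul, smul_add]

theorem psi0_kills (φ : (↥S.I ⧸ (S.I1 • (⊤ : Submodule R ↥S.I))) →ₗ[R] R ⧸ S.I1)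
    (c : R ⧸ S.I1) (hc : φ S.xi = S.b • c) :
    S.I1 • (⊤ : Submodule R ↥S.I1) ≤ LinearMap.ker (S.psi0 φ c hc) := by
  intro w hwm
  have hw2 : (w : R) ∈ S.I1 ^ 2 := by
    rw [Submodule.mem_smul_top_iff, smul_eq_mul] at hwm
    rw [pow_two]; exact hwm
  obtain ⟨κ, σ, hκ, hσ, hdec⟩ := S.sq1 hw2
  have hw : (w : R) - σ * S.a ∈ S.K := by rw [hdec]; simpa using S.KI1_le_K hκ
  rw [LinearMap.mem_ker]
  show φ (Submodule.Quotient.mk ⟨(w : R) - S.sCoef w * S.a, S.hKI (S.sCoef_spec w)⟩)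
      + S.sCoef w • c = 0
  rw [S.lemPhi φ c hc w hw]
  have e0 : (Submodule.Quotient.mk (⟨(w : R) - σ * S.a, S.hKI hw⟩ : ↥S.I)
      : ↥S.I ⧸ (S.I1 • (⊤ : Submodule R ↥S.I))) = 0 := by
    rw [S.mk_eq_zero_iff]
    show (w : R) - σ * S.a ∈ S.I1 * S.I
    rw [hdec]
    simpa using S.KI1_le_prod hκ
  rw [e0, map_zero, S.smul_quot_zero hσ, add_zero]

theorem smul_quotY_zero (z : R ⧸ S.IY) : S.b • z = 0 := by
  obtain ⟨t, rfl⟩ := Submodule.Quotient.mk_surjective _ z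
  rw [← Submodule.Quotient.mk_smul, Submodule.Quotient.mk_eq_zero, smul_eq_mul]
  exact Ideal.mul_mem_right _ _ S.hbIY

theorem lcomp_injective : Function.Injective (LinearMap.lcomp R (R ⧸ S.I1) S.f) := by
  rw [← LinearMap.ker_eq_bot, eq_bot_iff]
  intro ψ hψ
  rw [LinearMap.mem_ker] at hψ
  have hval : ∀ v : ↥S.I, ψ (S.f (Submodule.Quotient.mk v)) = 0 := by
    intro v
    have h1 := LinearMap.congr_fun hψ (Submodule.Quotient.mk v)
    simpa using h1
  have cA : ψ (S.I1.toCotangent ⟨S.a, S.haI1⟩) = 0 := by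
    apply S.Qb
    rw [← map_smul, ← map_smul]
    have e : S.b • (⟨S.a, S.haI1⟩ : ↥S.I1) = ⟨S.a * S.b, S.hII1 S.habI⟩ :=
      Subtype.ext (by simp [smul_eq_mul, mul_comm])
    rw [e]
    have e2 : S.I1.toCotangent ⟨S.a * S.b, S.hII1 S.habI⟩
        = S.f (Submodule.Quotient.mk ⟨S.a * S.b, S.habI⟩) := rfl
    rw [e2]
    exact hval _
  simp only [Submodule.mem_bot]
  refine LinearMap.ext fun z => ?_
  obtain ⟨w, rfl⟩ := S.I1.toCotangent_surjective z
  have hz0 : (w : R) - S.sCoef w * S.a ∈ S.K := S.sCoef_spec w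
  have hw : w = ⟨(w : R) - S.sCoef w * S.a, S.hKI1 hz0⟩ + S.sCoef w • ⟨S.a, S.haI1⟩ :=
    Subtype.ext (by push_cast [smul_eq_mul]; ring)
  rw [hw, map_add, map_add, map_smul, map_smul, cA, smul_zero, add_zero]
  have e3 : S.I1.toCotangent ⟨(w : R) - S.sCoef w * S.a, S.hKI1 hz0⟩
      = S.f (Submodule.Quotient.mk ⟨(w : R) - S.sCoef w * S.a, S.hKI hz0⟩) := rfl
  rw [e3, hval]
  rfl

theorem lcomp_exact : Function.Exact (LinearMap.lcomp R (R ⧸ S.I1) S.f) S.hmap := by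
  rw [LinearMap.exact_iff]
  ext φ
  simp only [LinearMap.mem_ker, LinearMap.mem_range]
  constructor
  · intro hφ
    obtain ⟨y, hy⟩ := Submodule.Quotient.mk_surjective _ (φ S.xi)
    have hyIY : y ∈ S.IY := by
      have h1 : S.pibar (φ S.xi) = 0 := hφ
      rw [← hy, S.pibar_mk, Submodule.Quotient.mk_eq_zero] at h1
      exact h1
    obtain ⟨s, hs⟩ := S.memY' hyIY
    set c : R ⧸ S.I1 := Submodule.Quotient.mk s with hcdef
    have hc : φ S.xi = S.b • c := by
      rw [← hy, hcdef, ← Submodule.Quotient.mk_smul, Submodule.Quotient.eq]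
      simpa [smul_eq_mul, mul_comm] using hs
    refine ⟨Submodule.liftQ _ (S.psi0 φ c hc) (S.psi0_kills φ c hc), ?_⟩
    apply Submodule.linearMap_qext
    refine LinearMap.ext fun v => ?_
    simp only [LinearMap.comp_apply, Submodule.mkQ_apply, LinearMap.lcomp_apply]
    show φ (Submodule.Quotient.mk ⟨(v : R) - S.sCoef ⟨(v : R), S.hII1 v.2⟩ * S.a,
            S.hKI (S.sCoef_spec ⟨(v : R), S.hII1 v.2⟩)⟩)
          + S.sCoef ⟨(v : R), S.hII1 v.2⟩ • c = φ (Submodule.Quotient.mk v)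
    set w : ↥S.I1 := ⟨(v : R), S.hII1 v.2⟩ with hwdef
    have hsa : S.sCoef w * S.a ∈ S.I := by
      have e : S.sCoef w * S.a = (v : R) - ((w : R) - S.sCoef w * S.a) := by
        rw [hwdef]; push_cast; ring
      rw [e]
      exact S.I.sub_mem v.2 (S.hKI (S.sCoef_spec w))
    have ev : v = ⟨(w : R) - S.sCoef w * S.a, S.hKI (S.sCoef_spec w)⟩
        + ⟨S.sCoef w * S.a, hsa⟩ := Subtype.ext (by push_cast; ring)
    conv_rhs => rw [ev]
    rw [Submodule.Quotient.mk_add, map_add, S.lemL φ _ hc hsa]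
  · rintro ⟨ψ, rfl⟩
    rw [S.hmap_apply]
    have e1 : S.f S.xi = S.I1.toCotangent ⟨S.a * S.b, S.hII1 S.habI⟩ := rfl
    have e2 : (⟨S.a * S.b, S.hII1 S.habI⟩ : ↥S.I1) = S.b • ⟨S.a, S.haI1⟩ :=
      Subtype.ext (by simp [smul_eq_mul, mul_comm])
    have : (LinearMap.lcomp R (R ⧸ S.I1) S.f ψ) S.xi = S.b • ψ (S.I1.toCotangent ⟨S.a, S.haI1⟩) := by
      rw [LinearMap.lcomp_apply, e1, e2, map_smul, map_smul]
    rw [this, map_smul, S.smul_quotY_zero]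

/-- `I/(I1·I) → R/I1`, `k + t·ab ↦ t`. -/
noncomputable def phi0lin : ↥S.I →ₗ[R] R ⧸ S.I1 where
  toFun x := Submodule.Quotient.mk (S.tCoef x)
  map_add' x y := by
    rw [← Submodule.Quotient.mk_add, Submodule.Quotient.eq]
    refine S.tCoef_unique ?_
    have h1 := S.K.add_mem (S.tCoef_spec x) (S.tCoef_spec y)
    have e : ((x : R) - S.tCoef x * (S.a * S.b)) + ((y : R) - S.tCoef y * (S.a * S.b))
        = ((x + y : ↥S.I) : R) - (S.tCoef x + S.tCoef y) * (S.a * S.b) := by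
      push_cast; ring
    rwa [e] at h1
  map_smul' r x := by
    simp only [RingHom.id_apply]
    rw [← Submodule.Quotient.mk_smul, Submodule.Quotient.eq]
    refine S.tCoef_unique ?_
    have h1 := S.K.smul_mem r (S.tCoef_spec x)
    have e : r • ((x : R) - S.tCoef x * (S.a * S.b))
        = ((r • x : ↥S.I) : R) - (r • S.tCoef x) * (S.a * S.b) := by
      push_cast [smul_eq_mul]; ring
    rwa [e] at h1

theorem phi0lin_kills : S.I1 • (⊤ : Submodule R ↥S.I) ≤ LinearMap.ker S.phi0lin := by
  intro x hx
  rw [Submodule.mem_smul_top_iff, smul_eq_mul] at hx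
  obtain ⟨κ, σ, hκ, hσ, hdec⟩ := S.prodII1mem hx
  have hK : (x : R) - σ * (S.a * S.b) ∈ S.K := by rw [hdec]; simpa using S.KI1_le_K hκ
  have h1 : S.tCoef x - σ ∈ S.I1 := S.tCoef_unique hK
  rw [LinearMap.mem_ker]
  show (Submodule.Quotient.mk (S.tCoef x) : R ⧸ S.I1) = 0
  rw [Submodule.Quotient.mk_eq_zero]
  have e : S.tCoef x = (S.tCoef x - σ) + σ := by ring
  rw [e]
  exact S.I1.add_mem h1 hσ

noncomputable def phi0 : (↥S.I ⧸ (S.I1 • (⊤ : Submodule R ↥S.I))) →ₗ[R] R ⧸ S.I1 :=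
  Submodule.liftQ _ S.phi0lin S.phi0lin_kills

theorem hmap_phi0 : S.hmap S.phi0 = Submodule.Quotient.mk 1 := by
  rw [S.hmap_apply]
  have e1 : S.phi0 S.xi = Submodule.Quotient.mk (S.tCoef ⟨S.a * S.b, S.habI⟩) := rfl
  have h1 : ((⟨S.a * S.b, S.habI⟩ : ↥S.I) : R) - 1 * (S.a * S.b) ∈ S.K := by simp
  have h2 : S.tCoef ⟨S.a * S.b, S.habI⟩ - 1 ∈ S.I1 := S.tCoef_unique h1
  have e2 : (Submodule.Quotient.mk (S.tCoef ⟨S.a * S.b, S.habI⟩) : R ⧸ S.I1)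
      = Submodule.Quotient.mk 1 := (Submodule.Quotient.eq _).mpr h2
  rw [e1, e2, S.pibar_mk]

theorem hmap_surjective : Function.Surjective S.hmap := by
  intro y
  obtain ⟨r, rfl⟩ := Submodule.Quotient.mk_surjective _ y
  refine ⟨r • S.phi0, ?_⟩
  rw [map_smul, S.hmap_phi0, ← Submodule.Quotient.mk_smul]
  congr 1
  simp [smul_eq_mul]

end Setup

end TUC16

theorem transverse_union_conormal_sequences
    (R : Type) [CommRing R] (m : ℕ) (u : Fin m → R) (a b : R)
    (hreg : RingTheory.Sequence.IsRegular R (List.ofFn u ++ [a, b]))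
    (I1 I IY : Ideal R)
    (hI1 : I1 = Ideal.span (Set.range u ∪ {a}))
    (hI : I = Ideal.span (Set.range u ∪ {a * b}))
    (hIY : IY = Ideal.span (Set.range u ∪ {a, b})) :
    ∃ (f : (↥I ⧸ (I1 • (⊤ : Submodule R ↥I))) →ₗ[R] I1.Cotangent)
      (g : I1.Cotangent →ₗ[R] R ⧸ IY),
      (∀ (x : R) (hx : x ∈ I) (hx1 : x ∈ I1),
          f (Submodule.Quotient.mk ⟨x, hx⟩) = I1.toCotangent ⟨x, hx1⟩) ∧
      (∀ ha : a ∈ I1, g (I1.toCotangent ⟨a, ha⟩) = 1) ∧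
      (∀ (i : Fin m) (hui : u i ∈ I1), g (I1.toCotangent ⟨u i, hui⟩) = 0) ∧
      Function.Injective f ∧ Function.Exact f g ∧ Function.Surjective g ∧
      ∃ h : ((↥I ⧸ (I1 • (⊤ : Submodule R ↥I))) →ₗ[R] R ⧸ I1) →ₗ[R] R ⧸ IY,
        Function.Injective (LinearMap.lcomp R (R ⧸ I1) f) ∧
        Function.Exact (LinearMap.lcomp R (R ⧸ I1) f) h ∧
        Function.Surjective h := by
  classical
  set K : Ideal R := Ideal.span (Set.range u) with hKdef
  -- extract the two regularity statements we need
  have hKof : Ideal.ofList (List.ofFn u) = K := by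
    unfold Ideal.ofList
    congr 1
    ext x; simp [List.mem_ofFn]
  have hw := hreg.toIsWeaklyRegular
  rw [RingTheory.Sequence.isWeaklyRegular_append_iff] at hw
  obtain ⟨-, hw⟩ := hw
  rw [RingTheory.Sequence.isWeaklyRegular_cons_iff] at hw
  obtain ⟨hra, hw⟩ := hw
  rw [RingTheory.Sequence.isWeaklyRegular_singleton_iff] at hw
  rw [hKof] at hra hw
  have hKsm : (K • ⊤ : Submodule R R) = K := by rw [smul_eq_mul, Ideal.mul_top]
  have hI1' : I1 = K ⊔ Ideal.span {a} := by rw [hI1, Ideal.span_union]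
  have hI' : I = K ⊔ Ideal.span {a * b} := by rw [hI, Ideal.span_union]
  have hIY' : IY = I1 ⊔ Ideal.span {b} := by
    rw [hIY, Ideal.span_union, Ideal.span_insert, hI1', sup_assoc]
  have hA : ∀ s : R, s * a ∈ K → s ∈ K := by
    intro s hs
    have h0 : a • (Submodule.Quotient.mk s : R ⧸ (K • ⊤ : Submodule R R))
        = a • (0 : R ⧸ (K • ⊤ : Submodule R R)) := by
      rw [smul_zero, ← Submodule.Quotient.mk_smul, Submodule.Quotient.mk_eq_zero, hKsm]
      simpa [mul_comm] using hs
    have h1 := hra h0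
    rw [← hKsm]
    rwa [← Submodule.Quotient.mk_eq_zero]
  have hB : ∀ s : R, s * b ∈ I1 → s ∈ I1 := by
    intro s hs
    rw [hI1'] at hs
    obtain ⟨k, hk, y, hy, hsb⟩ := Submodule.mem_sup.mp hs
    obtain ⟨r, rfl⟩ := Ideal.mem_span_singleton'.mp hy
    set Q := R ⧸ (K • ⊤ : Submodule R R) with hQ
    have h0 : b • (Submodule.Quotient.mk (Submodule.Quotient.mk s : Q) : QuotSMulTop a Q)
        = b • (0 : QuotSMulTop a Q) := by
      rw [smul_zero, ← Submodule.Quotient.mk_smul, Submodule.Quotient.mk_eq_zero]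
      have h2 : (b • (Submodule.Quotient.mk s : Q)) = Submodule.Quotient.mk (r * a) := by
        rw [← Submodule.Quotient.mk_smul, Submodule.Quotient.eq, hKsm]
        have h3 : b • s - r * a = k := by rw [smul_eq_mul, mul_comm b s, ← hsb]; ring
        rwa [h3]
      rw [h2]
      have h4 : (Submodule.Quotient.mk (r * a) : Q) = a • (Submodule.Quotient.mk r : Q) := by
        rw [← Submodule.Quotient.mk_smul]; congr 1; rw [smul_eq_mul, mul_comm]
      rw [h4]
      exact Submodule.smul_mem_pointwise_smul _ _ _ Submodule.mem_top
    have h1 := hw h0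
    rw [Submodule.Quotient.mk_eq_zero] at h1
    obtain ⟨z, -, hz⟩ := Set.mem_smul_set.mp h1
    obtain ⟨t, rfl⟩ := Submodule.Quotient.mk_surjective _ z
    rw [← Submodule.Quotient.mk_smul, Submodule.Quotient.eq, hKsm] at hz
    rw [hI1']
    have h5 : s - t * a ∈ K := by
      have h6 := K.neg_mem hz
      simpa [smul_eq_mul, mul_comm] using h6
    exact Submodule.mem_sup.mpr
      ⟨s - t * a, h5, t * a, Ideal.mem_span_singleton'.mpr ⟨t, rfl⟩, by ring⟩
  set S : TUC16.Setup R := ⟨K, I1, I, IY, a, b, hA, hB, hI1', hI', hIY'⟩ with hS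
  refine ⟨S.f, S.g, fun x hx hx1 => S.f_apply x hx hx1, ?_, ?_, S.f_injective, S.fg_exact,
    S.g_surjective, S.hmap, S.lcomp_injective, S.lcomp_exact, S.hmap_surjective⟩
  · intro ha
    have h1 : a - 1 * a ∈ K := by simp
    have := S.g_eq_mk_of ⟨a, ha⟩ h1
    rw [this]
    rfl
  · intro i hui
    have h1 : u i - 0 * a ∈ K := by
      simpa using Ideal.subset_span (Set.mem_range_self i)
    have := S.g_eq_mk_of ⟨u i, hui⟩ h1
    rw [this]
    exact Submodule.Quotient.mk_eq_zero _ |>.mpr (Submodule.zero_mem _)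
end
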